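/- arXiv:2209.02315 — 5 statements merged into one kernel-verified Lean document; each statement's English description precedes it below -/
import Mathlib

section
/- Let b_j ∈ {−1, 1} and a_j ∈ ℝⁿ for j ∈ [q], and consider the sparse logistic regression problem: minimize F(x) := Σ_{j∈[q]} log(1 + exp(−b_j a_jᵀ x)) + γ T_{K,n,1}(x) over x ∈ ℝⁿ, with γ > 0 and K ∈ {0, …, n−1}. If γ > Σ_{j∈[q]} ‖a_j‖_∞, then every d-stationary point x* of this problem satisfies T_{K,n,1}(x*) = 0, i.e., ‖x*‖₀ ≤ K. -/
open Filter Topology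

/-- `f` has one-sided directional derivative `L` at `x` in direction `d`. -/
def HasDDerivAt {E : Type*} [AddCommMonoid E] [SMul ℝ E] (f : E → ℝ) (x d : E) (L : ℝ) :
    Prop :=
  Tendsto (fun ς : ℝ => (f (x + ς • d) - f x) / ς) (nhdsWithin 0 (Set.Ioi 0)) (nhds L)

/-- The trimmed ℓ₁ norm `T_{K,n,1}`: the sum of the `n − K` smallest absolute entries. -/
noncomputable def trimmed1 {n : ℕ} (K : ℕ) (v : Fin n → ℝ) : ℝ :=
  sInf {s : ℝ | ∃ Λ : Finset (Fin n), Λ.card = n - K ∧ s = ∑ i ∈ Λ, |v i|}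

/-- ℓ∞ norm of a vector. -/
noncomputable def linf {k : ℕ} (v : Fin k → ℝ) : ℝ := sSup (Set.range fun j => |v j|)

/-- The number of nonzero entries `‖v‖₀`. -/
noncomputable def l0 {k : ℕ} (v : Fin k → ℝ) : ℕ :=
  (Finset.univ.filter fun i => v i ≠ 0).card

namespace Stmt12Aux

variable {n K : ℕ}

lemma tset_nonempty (K : ℕ) (v : Fin n → ℝ) :
    {s : ℝ | ∃ Λ : Finset (Fin n), Λ.card = n - K ∧ s = ∑ i ∈ Λ, |v i|}.Nonempty := by
  obtain ⟨t, -, ht⟩ := Finset.exists_subset_card_eq (s := (Finset.univ : Finset (Fin n))) (n := n - K)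
    (by simpa using Nat.sub_le n K)
  exact ⟨_, t, ht, rfl⟩

lemma tset_finite (K : ℕ) (v : Fin n → ℝ) :
    {s : ℝ | ∃ Λ : Finset (Fin n), Λ.card = n - K ∧ s = ∑ i ∈ Λ, |v i|}.Finite := by
  have h : {s : ℝ | ∃ Λ : Finset (Fin n), Λ.card = n - K ∧ s = ∑ i ∈ Λ, |v i|} ⊆
      (fun Λ : Finset (Fin n) => ∑ i ∈ Λ, |v i|) '' Set.univ := by
    rintro s ⟨Λ, -, rfl⟩
    exact ⟨Λ, trivial, rfl⟩
  exact (Set.finite_univ.image _).subset h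

lemma trimmed1_le (K : ℕ) (v : Fin n → ℝ) {Λ : Finset (Fin n)} (h : Λ.card = n - K) :
    trimmed1 K v ≤ ∑ i ∈ Λ, |v i| :=
  csInf_le (tset_finite K v).bddBelow ⟨Λ, h, rfl⟩

lemma trimmed1_mem (K : ℕ) (v : Fin n → ℝ) :
    ∃ Λ : Finset (Fin n), Λ.card = n - K ∧ trimmed1 K v = ∑ i ∈ Λ, |v i| :=
  (tset_nonempty K v).csInf_mem (tset_finite K v)

lemma le_trimmed1 (K : ℕ) (v : Fin n → ℝ) {c : ℝ}
    (h : ∀ Λ : Finset (Fin n), Λ.card = n - K → c ≤ ∑ i ∈ Λ, |v i|) :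
    c ≤ trimmed1 K v :=
  le_csInf (tset_nonempty K v) (by rintro s ⟨Λ, hΛ, rfl⟩; exact h Λ hΛ)

lemma trimmed1_nonneg (K : ℕ) (v : Fin n → ℝ) : 0 ≤ trimmed1 K v :=
  le_trimmed1 K v fun Λ _ => Finset.sum_nonneg fun i _ => abs_nonneg _

lemma trimmed1_eq_zero_of_l0_le (v : Fin n → ℝ) (h : l0 v ≤ K) :
    trimmed1 K v = 0 := by
  have hz : (Finset.univ.filter fun i => v i = 0).card + l0 v = n := by
    have := Finset.card_filter_add_card_filter_not
      (s := (Finset.univ : Finset (Fin n))) (p := fun i => v i = 0)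
    simpa [l0, ne_eq] using this
  have hcard : n - K ≤ (Finset.univ.filter fun i => v i = 0).card := by omega
  obtain ⟨Λ, hΛsub, hΛcard⟩ :=
    Finset.exists_subset_card_eq (s := Finset.univ.filter fun i => v i = 0) (n := n - K) hcard
  have hsum : ∑ i ∈ Λ, |v i| = 0 := by
    refine Finset.sum_eq_zero fun i hi => ?_
    have := (Finset.mem_filter.1 (hΛsub hi)).2
    simp [this]
  have h1 := trimmed1_le K v hΛcard
  have h2 := trimmed1_nonneg K v
  linarith [h1.trans_eq hsum]

lemma abs_step {x ς : ℝ} (hx : x ≠ 0) (h1 : 0 ≤ ς) (h2 : ς < |x|) :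
    |x + ς * (if 0 < x then (-1:ℝ) else 1)| = |x| - ς := by
  rcases hx.lt_or_gt with h | h
  · have hx' : ¬ (0 : ℝ) < x := not_lt.2 h.le
    rw [if_neg hx']
    rw [abs_of_neg h] at h2
    rw [abs_of_neg h, abs_of_neg (by linarith : x + ς * 1 < 0)]
    ring
  · rw [if_pos h]
    rw [abs_of_pos h] at h2
    rw [abs_of_pos h, abs_of_pos (by linarith : (0:ℝ) < x + ς * (-1))]
    ring

lemma trimmed1_step {v w : Fin n → ℝ} {i₀ : Fin n} {ς : ℝ} (hς : 0 ≤ ς)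
    (habs : ∀ i, |w i| = |v i| - (if i = i₀ then ς else 0))
    {Λ₀ : Finset (Fin n)} (hcard : Λ₀.card = n - K) (hi₀ : i₀ ∈ Λ₀)
    (hact : trimmed1 K v = ∑ i ∈ Λ₀, |v i|) :
    trimmed1 K w = trimmed1 K v - ς := by
  have hsum : ∀ Λ : Finset (Fin n),
      ∑ i ∈ Λ, |w i| = ∑ i ∈ Λ, |v i| - (if i₀ ∈ Λ then ς else 0) := by
    intro Λ
    rw [Finset.sum_congr rfl (fun i _ => habs i), Finset.sum_sub_distrib,
      Finset.sum_ite_eq' Λ i₀ (fun _ => ς)]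
  apply le_antisymm
  · calc trimmed1 K w ≤ ∑ i ∈ Λ₀, |w i| := trimmed1_le K w hcard
      _ = trimmed1 K v - ς := by rw [hsum, if_pos hi₀, hact]
  · refine le_trimmed1 K w fun Λ hΛ => ?_
    rw [hsum]
    have := trimmed1_le K v hΛ
    split <;> linarith

lemma log_exp_hasDeriv (β u v : ℝ) :
    HasDerivAt (fun t : ℝ => Real.log (1 + Real.exp (β * (u + t * v))))
      (Real.exp (β * u) * (β * v) / (1 + Real.exp (β * u))) 0 := by
  have h0 : HasDerivAt (fun t : ℝ => u + t * v) v 0 := by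
    simpa using ((hasDerivAt_id (0:ℝ)).mul_const v).const_add u
  have h1 := h0.const_mul β
  have h2 := h1.exp
  have h3 := h2.const_add 1
  have hpos : (0:ℝ) < 1 + Real.exp (β * (u + 0 * v)) := by positivity
  have h4 := h3.log (ne_of_gt hpos)
  simpa using h4

lemma Dbound (w m : ℝ) : Real.exp w * m / (1 + Real.exp w) ≤ |m| := by
  have h1 : (0:ℝ) < 1 + Real.exp w := by positivity
  rw [div_le_iff₀ h1]
  nlinarith [Real.exp_pos w, le_abs_self m, abs_nonneg m]

end Stmt12Aux

open Stmt12Aux in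
/-- Exact penalty for sparse logistic regression. -/
theorem stmt12 {q n : ℕ} {K : ℕ} (hK : K < n)
    (γ : ℝ) (hγ : 0 < γ)
    (b : Fin q → ℝ) (hb : ∀ j, b j = 1 ∨ b j = -1)
    (a : Fin q → Fin n → ℝ)
    (F : (Fin n → ℝ) → ℝ)
    (hF : ∀ x, F x =
      (∑ j, Real.log (1 + Real.exp (-(b j) * ∑ i, a j i * x i))) + γ * trimmed1 K x)
    -- γ > Σ_j ‖a_j‖_∞
    (hthr : γ > ∑ j, linf (a j))
    (xstar : Fin n → ℝ)
    -- x* is a d-stationary point of F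
    (hstat : ∀ d, ∀ Ld : ℝ, HasDDerivAt F xstar d Ld → 0 ≤ Ld) :
    trimmed1 K xstar = 0 ∧ l0 xstar ≤ K := by
  have main : l0 xstar ≤ K := by
    by_contra hl0
    push_neg at hl0
    obtain ⟨Λ₀, hΛ₀card, hΛ₀⟩ := trimmed1_mem K xstar
    have hexi : ∃ i₀ ∈ Λ₀, xstar i₀ ≠ 0 := by
      by_contra hcon
      push_neg at hcon
      have hsub : Λ₀ ⊆ Finset.univ.filter (fun i => xstar i = 0) := fun i hi =>
        Finset.mem_filter.2 ⟨Finset.mem_univ i, hcon i hi⟩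
      have h1 : Λ₀.card ≤ (Finset.univ.filter fun i => xstar i = 0).card :=
        Finset.card_le_card hsub
      have hz : (Finset.univ.filter fun i => xstar i = 0).card + l0 xstar = n := by
        have := Finset.card_filter_add_card_filter_not
          (s := (Finset.univ : Finset (Fin n))) (p := fun i => xstar i = 0)
        simpa [l0, ne_eq] using this
      omega
    obtain ⟨i₀, hi₀Λ, hi₀⟩ := hexi
    have hεpos : (0:ℝ) < |xstar i₀| := abs_pos.2 hi₀
    set c : ℝ := if 0 < xstar i₀ then (-1:ℝ) else 1 with hc
    set d : Fin n → ℝ := fun i => if i = i₀ then c else 0 with hd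
    -- pointwise absolute values after a step
    have habs : ∀ ς : ℝ, 0 < ς → ς < |xstar i₀| → ∀ i,
        |(xstar + ς • d) i| = |xstar i| - (if i = i₀ then ς else 0) := by
      intro ς h1 h2 i
      by_cases h : i = i₀
      · subst h
        simp only [Pi.add_apply, Pi.smul_apply, hd, if_pos rfl, smul_eq_mul, if_pos rfl]
        rw [hc]
        exact abs_step hi₀ h1.le h2
      · simp [hd, h]
    -- trimmed norm after a step
    have hT : ∀ ς ∈ Set.Ioo (0:ℝ) |xstar i₀|,
        trimmed1 K (xstar + ς • d) = trimmed1 K xstar - ς := fun ς hς =>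
      trimmed1_step hς.1.le (habs ς hς.1 hς.2) hΛ₀card hi₀Λ hΛ₀
    set u : Fin q → ℝ := fun j => ∑ i, a j i * xstar i with hu
    set v : Fin q → ℝ := fun j => a j i₀ * c with hv
    -- inner products after a step
    have hdot : ∀ ς : ℝ, ∀ j, (∑ i, a j i * (xstar + ς • d) i) = u j + ς * v j := by
      intro ς j
      have hpt : ∀ i, a j i * (xstar + ς • d) i =
          a j i * xstar i + (if i = i₀ then ς * (a j i₀ * c) else 0) := by
        intro i
        simp only [Pi.add_apply, Pi.smul_apply, smul_eq_mul, hd]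
        by_cases h : i = i₀
        · subst h; rw [if_pos rfl, if_pos rfl]; ring
        · rw [if_neg h, if_neg h]; ring
      rw [Finset.sum_congr rfl fun i _ => hpt i, Finset.sum_add_distrib,
        Finset.sum_ite_eq' Finset.univ i₀ (fun _ => ς * (a j i₀ * c)),
        if_pos (Finset.mem_univ i₀)]
    set φ : ℝ → ℝ :=
      fun t => ∑ j, Real.log (1 + Real.exp (-(b j) * (u j + t * v j))) with hφdef
    set D : ℝ := ∑ j, Real.exp (-(b j) * u j) * (-(b j) * v j) /
      (1 + Real.exp (-(b j) * u j)) with hD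
    have hφ : HasDerivAt φ D 0 :=
      HasDerivAt.fun_sum fun j _ => log_exp_hasDeriv (-(b j)) (u j) (v j)
    have hslope : Tendsto (fun ς : ℝ => (φ ς - φ 0) / ς) (𝓝[>] (0:ℝ)) (𝓝 D) := by
      have h1 := hasDerivAt_iff_tendsto_slope.1 hφ
      have h2 : Tendsto (slope φ 0) (𝓝[>] (0:ℝ)) (𝓝 D) :=
        h1.mono_left (nhdsWithin_mono 0 fun x hx => ne_of_gt hx)
      exact h2.congr fun ς => by rw [slope_def_field, sub_zero]
    have hεIoo : Set.Ioo (0:ℝ) |xstar i₀| ∈ 𝓝[>] (0:ℝ) :=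
      Ioo_mem_nhdsGT_of_mem ⟨le_refl 0, hεpos⟩
    have heq : ∀ ς ∈ Set.Ioo (0:ℝ) |xstar i₀|,
        (F (xstar + ς • d) - F xstar) / ς = (φ ς - φ 0) / ς - γ := by
      intro ς hς
      have e2 : φ ς = ∑ j, Real.log (1 + Real.exp (-(b j) * ∑ i, a j i * (xstar + ς • d) i)) := by
        rw [hφdef]
        exact Finset.sum_congr rfl fun j _ => by rw [hdot ς j]
      have e3 : φ 0 = ∑ j, Real.log (1 + Real.exp (-(b j) * ∑ i, a j i * xstar i)) := by
        rw [hφdef]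
        refine Finset.sum_congr rfl fun j _ => ?_
        rw [hu]; norm_num
      rw [hF, hF, hT ς hς, ← e2, ← e3]
      have hςne : ς ≠ 0 := ne_of_gt hς.1
      field_simp
      ring
    have hFt : HasDDerivAt F xstar d (D - γ) := by
      have base : Tendsto (fun ς : ℝ => (φ ς - φ 0) / ς - γ) (𝓝[>] (0:ℝ)) (𝓝 (D - γ)) :=
        hslope.sub_const γ
      refine Tendsto.congr' ?_ base
      filter_upwards [hεIoo] with ς hς
      exact (heq ς hς).symm
    have hge := hstat d (D - γ) hFt
    -- bound D
    have hcabs : |c| = 1 := by rw [hc]; split <;> norm_num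
    have hDle : D ≤ ∑ j, linf (a j) := by
      rw [hD]
      refine Finset.sum_le_sum fun j _ => ?_
      calc Real.exp (-(b j) * u j) * (-(b j) * v j) / (1 + Real.exp (-(b j) * u j))
          ≤ |(-(b j)) * v j| := Dbound _ _
        _ = |a j i₀| := by
            rw [abs_mul, abs_neg, hv]
            rcases hb j with h | h <;> simp [h, abs_mul, hcabs]
        _ ≤ linf (a j) :=
            le_csSup (Set.finite_range _).bddAbove (Set.mem_range_self i₀)
    linarith
  exact ⟨trimmed1_eq_zero_of_l0_le xstar main, main⟩
end

section
/- Let b_j ∈ {−1, 1} and a_j ∈ ℝⁿ for j ∈ [q], and consider the sparse support vector machine problem: minimize F(x) := Σ_{j∈[q]} max{1 − b_j a_jᵀ x, 0} + γ T_{K,n,1}(x) over x ∈ ℝⁿ, with γ > 0 and K ∈ {0, …, n−1}. If γ > Σ_{j∈[q]} ‖a_j‖_∞, then every d-stationary point x* of this problem satisfies T_{K,n,1}(x*) = 0, i.e., ‖x*‖₀ ≤ K. -/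
open Filter Topology

lemma trimmed1_spec {n : ℕ} (K : ℕ) (v : Fin n → ℝ) :
    ∃ Λ : Finset (Fin n), Λ.card = n - K ∧ trimmed1 K v = ∑ i ∈ Λ, |v i| ∧
      ∀ Λ' : Finset (Fin n), Λ'.card = n - K → trimmed1 K v ≤ ∑ i ∈ Λ', |v i| := by
  have hfin : {s : ℝ | ∃ Λ : Finset (Fin n), Λ.card = n - K ∧ s = ∑ i ∈ Λ, |v i|}.Finite := by
    apply (Set.finite_range (fun Λ : Finset (Fin n) => ∑ i ∈ Λ, |v i|)).subset
    rintro s ⟨Λ, -, rfl⟩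
    exact ⟨Λ, rfl⟩
  have hne : {s : ℝ | ∃ Λ : Finset (Fin n), Λ.card = n - K ∧ s = ∑ i ∈ Λ, |v i|}.Nonempty := by
    obtain ⟨Λ, -, hcard⟩ := Finset.exists_subset_card_eq (s := (Finset.univ : Finset (Fin n)))
      (n := n - K) (by simp)
    exact ⟨_, Λ, hcard, rfl⟩
  have hmem := hne.csInf_mem hfin
  obtain ⟨Λ, hcard, heq⟩ := hmem
  exact ⟨Λ, hcard, heq, fun Λ' h' => csInf_le hfin.bddBelow ⟨Λ', h', rfl⟩⟩


/-- Exact penalty for the sparse support vector machine (hinge loss). -/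
theorem stmt13 {q n : ℕ} {K : ℕ} (hK : K < n)
    (γ : ℝ) (hγ : 0 < γ)
    (b : Fin q → ℝ) (hb : ∀ j, b j = 1 ∨ b j = -1)
    (a : Fin q → Fin n → ℝ)
    (F : (Fin n → ℝ) → ℝ)
    (hF : ∀ x, F x =
      (∑ j, max (1 - b j * ∑ i, a j i * x i) 0) + γ * trimmed1 K x)
    -- γ > Σ_j ‖a_j‖_∞
    (hthr : γ > ∑ j, linf (a j))
    (xstar : Fin n → ℝ)
    -- x* is a d-stationary point of F
    (hstat : ∀ d, ∀ Ld : ℝ, HasDDerivAt F xstar d Ld → 0 ≤ Ld) :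
    trimmed1 K xstar = 0 ∧ l0 xstar ≤ K := by
  have hcards : (Finset.univ.filter fun i => xstar i = 0).card + l0 xstar = n := by
    rw [l0, Finset.card_filter_add_card_filter_not (p := fun i => xstar i = 0)]
    · simp
  suffices hl0 : l0 xstar ≤ K by
    refine ⟨?_, hl0⟩
    obtain ⟨Λ, hsub, hcard⟩ := Finset.exists_subset_card_eq
      (s := Finset.univ.filter fun i => xstar i = 0) (n := n - K) (by omega)
    obtain ⟨Λm, hcm, heqm, hlem⟩ := trimmed1_spec K xstar
    have h1 : trimmed1 K xstar ≤ 0 := by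
      have hh := hlem Λ hcard
      have hz : ∑ i ∈ Λ, |xstar i| = 0 := by
        apply Finset.sum_eq_zero
        intro i hi
        have := hsub hi
        simp only [Finset.mem_filter] at this
        simp [this.2]
      linarith
    have h2 : 0 ≤ trimmed1 K xstar := by
      rw [heqm]
      positivity
    linarith
  by_contra hl0
  push_neg at hl0
  have hNne : (Finset.univ.filter fun i => xstar i ≠ 0).Nonempty := by
    rw [← Finset.card_pos]
    change 0 < l0 xstar
    omega
  obtain ⟨i₀, hi₀mem, hmin⟩ := Finset.exists_min_image _ (fun i => |xstar i|) hNne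
  simp only [Finset.mem_filter, Finset.mem_univ, true_and] at hi₀mem
  have habs : 0 < |xstar i₀| := abs_pos.mpr hi₀mem
  set s : ℝ := if 0 ≤ xstar i₀ then (1:ℝ) else -1 with hs
  have hsabs : |s| = 1 := by
    rw [hs]; split <;> simp
  set d : Fin n → ℝ := fun i => if i = i₀ then -s else 0 with hd
  have hx' : ∀ ς : ℝ, ∀ i, (xstar + ς • d) i = xstar i + ς * d i := by
    intro ς i; simp
  have hxo : ∀ ς : ℝ, 0 ≤ ς → ς ≤ |xstar i₀| → |(xstar + ς • d) i₀| = |xstar i₀| - ς := by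
    intro ς h0 h1
    rw [hx' ς i₀]
    simp only [hd, if_pos rfl]
    rcases le_or_gt 0 (xstar i₀) with hpos | hneg
    · rw [hs, if_pos hpos] at *
      rw [abs_of_nonneg hpos] at h1 ⊢
      rw [abs_of_nonneg (by linarith)]
      ring
    · rw [hs, if_neg (not_le.mpr hneg)] at *
      rw [abs_of_neg hneg] at h1 ⊢
      rw [abs_of_nonpos (by linarith)]
      ring
  have hxne : ∀ ς : ℝ, ∀ i, i ≠ i₀ → (xstar + ς • d) i = xstar i := by
    intro ς i hi
    rw [hx']
    simp [hd, hi]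
  have hsum : ∀ ς : ℝ, 0 ≤ ς → ς ≤ |xstar i₀| → ∀ Λ : Finset (Fin n), i₀ ∈ Λ →
      ∑ i ∈ Λ, |(xstar + ς • d) i| = (∑ i ∈ Λ, |xstar i|) - ς := by
    intro ς h0 h1 Λ hmem
    rw [← Finset.add_sum_erase _ _ hmem, ← Finset.add_sum_erase _ (fun i => |xstar i|) hmem,
      hxo ς h0 h1]
    have : ∑ i ∈ Λ.erase i₀, |(xstar + ς • d) i| = ∑ i ∈ Λ.erase i₀, |xstar i| := by
      apply Finset.sum_congr rfl
      intro i hi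
      rw [hxne ς i (Finset.ne_of_mem_erase hi)]
    rw [this]; ring
  have hsum' : ∀ ς : ℝ, ∀ Λ : Finset (Fin n), i₀ ∉ Λ →
      ∑ i ∈ Λ, |(xstar + ς • d) i| = ∑ i ∈ Λ, |xstar i| := by
    intro ς Λ hmem
    apply Finset.sum_congr rfl
    intro i hi
    exact congrArg abs (hxne ς i (fun h => hmem (h ▸ hi)))
  obtain ⟨Λm, hcm, heqm, hlem⟩ := trimmed1_spec K xstar
  have hopt : ∃ Λ : Finset (Fin n), Λ.card = n - K ∧ i₀ ∈ Λ ∧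
      ∑ i ∈ Λ, |xstar i| = trimmed1 K xstar := by
    by_cases hi : i₀ ∈ Λm
    · exact ⟨Λm, hcm, hi, heqm.symm⟩
    · have hjex : ∃ j ∈ Λm, xstar j ≠ 0 := by
        by_contra hall
        push_neg at hall
        have hsubz : Λm ⊆ Finset.univ.filter fun i => xstar i = 0 := by
          intro j hj
          simp only [Finset.mem_filter, Finset.mem_univ, true_and]
          exact hall j hj
        have := Finset.card_le_card hsubz
        omega
      obtain ⟨j, hjm, hjne⟩ := hjex
      have hij : |xstar i₀| ≤ |xstar j| := hmin j (by simp [hjne])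
      refine ⟨insert i₀ (Λm.erase j), ?_, Finset.mem_insert_self _ _, ?_⟩
      · rw [Finset.card_insert_of_notMem (fun h => hi (Finset.mem_of_mem_erase h)),
          Finset.card_erase_of_mem hjm]
        omega
      · have hle : ∑ i ∈ insert i₀ (Λm.erase j), |xstar i| ≤ ∑ i ∈ Λm, |xstar i| := by
          rw [Finset.sum_insert (fun h => hi (Finset.mem_of_mem_erase h)),
            ← Finset.add_sum_erase _ (fun i => |xstar i|) hjm]
          linarith
        have hge := hlem (insert i₀ (Λm.erase j)) (by
          rw [Finset.card_insert_of_notMem (fun h => hi (Finset.mem_of_mem_erase h)),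
            Finset.card_erase_of_mem hjm]
          omega)
        exact le_antisymm (by rw [heqm]; exact hle) hge
  obtain ⟨Λs, hcs, hmems, hsums⟩ := hopt
  have hTshift : ∀ ς : ℝ, 0 < ς → ς ≤ |xstar i₀| →
      trimmed1 K (xstar + ς • d) = trimmed1 K xstar - ς := by
    intro ς h0 h1
    obtain ⟨Λm', hcm', heqm', hlem'⟩ := trimmed1_spec K (xstar + ς • d)
    have hub : trimmed1 K (xstar + ς • d) ≤ trimmed1 K xstar - ς := by
      have := hlem' Λs hcs
      rw [hsum ς h0.le h1 Λs hmems, hsums] at this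
      exact this
    have hlb : trimmed1 K xstar - ς ≤ trimmed1 K (xstar + ς • d) := by
      rw [heqm']
      by_cases hi : i₀ ∈ Λm'
      · rw [hsum ς h0.le h1 Λm' hi]
        linarith [hlem Λm' hcm']
      · rw [hsum' ς Λm' hi]
        linarith [hlem Λm' hcm']
    linarith
  -- hinge part
  set c : Fin q → ℝ := fun j => 1 - b j * ∑ i, a j i * xstar i with hc
  set t : Fin q → ℝ := fun j => b j * (a j i₀ * (-s)) with ht
  have hsd : ∀ j, ∀ ς : ℝ, ∑ i, a j i * (xstar + ς • d) i
      = (∑ i, a j i * xstar i) + ς * (a j i₀ * (-s)) := by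
    intro j ς
    have hterm : ∀ i, a j i * (xstar + ς • d) i = a j i * xstar i + ς * (a j i * d i) := by
      intro i; rw [hx']; ring
    rw [Fintype.sum_congr _ _ hterm, Finset.sum_add_distrib, ← Finset.mul_sum]
    congr 1
    congr 1
    rw [Fintype.sum_eq_single i₀ (fun i hi => by simp [hd, hi])]
    simp [hd]
  set Lh : Fin q → ℝ := fun j => if 0 < c j then -(t j) else if c j < 0 then 0 else max (-(t j)) 0
    with hLh
  have hhinge : ∀ j, ∀ᶠ ς in 𝓝[>] (0:ℝ),
      max (1 - b j * ∑ i, a j i * (xstar + ς • d) i) 0 - max (c j) 0 = ς * Lh j := by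
    intro j
    have hkey : ∀ ς : ℝ, 1 - b j * ∑ i, a j i * (xstar + ς • d) i = c j - ς * t j := by
      intro ς; rw [hsd j ς]; simp only [hc, ht]; ring
    rcases lt_trichotomy (c j) 0 with hcj | hcj | hcj
    · filter_upwards [Ioo_mem_nhdsGT_of_mem (c := (0:ℝ)) (b := 0)
        (a := -(c j) / (|t j| + 1))
        ⟨le_refl 0, div_pos (by linarith) (by positivity)⟩] with ς hς
      obtain ⟨h0, h1⟩ := hς
      have h2 : ς * (|t j| + 1) < -(c j) := (lt_div_iff₀ (by positivity)).mp h1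
      rw [mul_add, mul_one] at h2
      have hmul : ς * (-(t j)) ≤ ς * |t j| :=
        mul_le_mul_of_nonneg_left (neg_le_abs (t j)) h0.le
      have hne : c j - ς * t j < 0 := by linarith
      rw [hkey, max_eq_right hne.le, max_eq_right hcj.le, hLh]
      simp [not_lt.mpr hcj.le, hcj]
    · filter_upwards [self_mem_nhdsWithin] with ς hς
      simp only [Set.mem_Ioi] at hς
      have h1 : max (c j - ς * t j) 0 = ς * max (-(t j)) 0 := by
        rw [hcj, zero_sub, ← mul_neg, mul_max_of_nonneg _ _ hς.le, mul_zero]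
      rw [hkey, h1, hcj, max_self, sub_zero, hLh]
      simp [hcj]
    · filter_upwards [Ioo_mem_nhdsGT_of_mem (c := (0:ℝ)) (b := 0)
        (a := c j / (|t j| + 1))
        ⟨le_refl 0, div_pos hcj (by positivity)⟩] with ς hς
      obtain ⟨h0, h1⟩ := hς
      have h2 : ς * (|t j| + 1) < c j := (lt_div_iff₀ (by positivity)).mp h1
      rw [mul_add, mul_one] at h2
      have hmul : ς * t j ≤ ς * |t j| :=
        mul_le_mul_of_nonneg_left (le_abs_self (t j)) h0.le
      have hpos : 0 < c j - ς * t j := by linarith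
      rw [hkey, max_eq_left hpos.le, max_eq_left hcj.le, hLh]
      simp only [if_pos hcj]
      ring
  -- assemble the directional derivative
  set Ld : ℝ := (∑ j, Lh j) - γ with hLd
  have hev : ∀ᶠ ς in 𝓝[>] (0:ℝ), (F (xstar + ς • d) - F xstar) / ς = Ld := by
    have hall : ∀ᶠ ς in 𝓝[>] (0:ℝ), ∀ j,
        max (1 - b j * ∑ i, a j i * (xstar + ς • d) i) 0 - max (c j) 0 = ς * Lh j := by
      rw [eventually_all]
      exact hhinge
    filter_upwards [hall, Ioc_mem_nhdsGT_of_mem (c := (0:ℝ)) (b := 0) (a := |xstar i₀|)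
        ⟨le_refl 0, habs⟩, self_mem_nhdsWithin] with ς h1 h2 h3
    simp only [Set.mem_Ioc] at h2
    simp only [Set.mem_Ioi] at h3
    have hςne : ς ≠ 0 := ne_of_gt h3
    rw [hF, hF, hTshift ς h3 h2.2]
    have hsum2 : ∑ j, max (1 - b j * ∑ i, a j i * (xstar + ς • d) i) 0
        = (∑ j, max (c j) 0) + ς * ∑ j, Lh j := by
      rw [Finset.mul_sum, ← Finset.sum_add_distrib]
      apply Finset.sum_congr rfl
      intro j _
      linarith [h1 j]
    have hcsum : (∑ j, max (1 - b j * ∑ i, a j i * xstar i) 0) = ∑ j, max (c j) 0 := rfl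
    rw [hsum2, hcsum, hLd]
    field_simp
    ring
  have hstatL : (0:ℝ) ≤ Ld := hstat d Ld (tendsto_const_nhds.congr'
    (Filter.EventuallyEq.symm (hev : (fun ς : ℝ => (F (xstar + ς • d) - F xstar) / ς) =ᶠ[𝓝[>] (0:ℝ)] fun _ => Ld)))
  -- bound Lh j by linf (a j)
  have hLhle : ∀ j, Lh j ≤ linf (a j) := by
    intro j
    have htabs : |t j| = |a j i₀| := by
      simp only [ht]
      rw [abs_mul, abs_mul, abs_neg, hsabs]
      rcases hb j with h | h <;> rw [h] <;> norm_num
    have htle : |t j| ≤ linf (a j) := by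
      rw [htabs, linf]
      exact le_csSup ((Set.finite_range _).bddAbove) ⟨i₀, rfl⟩
    simp only [hLh]
    split
    · linarith [neg_le_abs (t j)]
    · split
      · linarith [abs_nonneg (t j)]
      · exact le_trans (max_le (neg_le_abs _) (abs_nonneg _)) htle
  have hsumle : ∑ j, Lh j ≤ ∑ j, linf (a j) :=
    Finset.sum_le_sum fun j _ => hLhle j
  rw [hLd] at hstatL
  linarith
end

section
/- Consider the constrained trimmed lasso: minimize F(x₀, x₁, …, x_L) := f(x₀, …, x_L) + Σ_{l∈[L]} γ_l T_{K_l, n_l, 1}(x_l) over (x₀, …, x_L) ∈ C, where C ⊆ ℝ^{n₀} × ℝ^{n₁} × ⋯ × ℝ^{n_L}, γ_l > 0, K_l ∈ {0, …, n_l − 1}, and f is directionally differentiable on C. Let x* = (x₀*, x₁*, …, x_L*) ∈ C be a d-stationary point, i.e., F′(x*; d) ≥ 0 for all d ∈ F(x*; C). Fix l ∈ [L] and assume: (B1) for any x = (x₀, …, x_L) ∈ C and any i ∈ [n_l], the direction which is −(x_l)_i e_i in block l and zero elsewhere belongs to F(x; C); (B2) there exists Γ_l > 0 such that f′(x*; (0,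 …, d_l, …, 0)) ≤ Γ_l for every d_l ∈ {−1, 0, 1}^{n_l} with ‖d_l‖₁ = 1 such that the direction (0, …, d_l, …, 0) lies in F(x*; C). If γ_l > Γ_l, then T_{K_l, n_l, 1}(x_l*) = 0, i.e., ‖x_l*‖₀ ≤ K_l. -/
open Filter Topology

/-- The feasible cone of `C` at `x`. -/
def feasCone {E : Type*} [AddCommMonoid E] [SMul ℝ E] (C : Set E) (x : E) : Set E :=
  {d | x ∈ C ∧ ∃ ς' > (0 : ℝ), ∀ ς : ℝ, 0 < ς → ς < ς' → x + ς • d ∈ C}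

/- ---------------- auxiliary lemmas ---------------- -/

lemma feasCone_smul {E : Type*} [AddCommMonoid E] [Module ℝ E] {C : Set E} {x d : E}
    {c : ℝ} (hc : 0 < c) (hd : d ∈ feasCone C x) : c • d ∈ feasCone C x := by
  obtain ⟨hx, ς', hς', h⟩ := hd
  refine ⟨hx, ς' / c, div_pos hς' hc, fun ς h0 h1 => ?_⟩
  rw [smul_smul]
  exact h (ς * c) (mul_pos h0 hc) ((lt_div_iff₀ hc).mp h1)

lemma trimmed1_le {n K : ℕ} (v : Fin n → ℝ) {Λ : Finset (Fin n)} (hΛ : Λ.card = n - K) :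
    trimmed1 K v ≤ ∑ i ∈ Λ, |v i| := by
  apply csInf_le
  · exact ⟨0, by rintro s ⟨Λ', _, rfl⟩; exact Finset.sum_nonneg fun j _ => abs_nonneg _⟩
  · exact ⟨Λ, hΛ, rfl⟩

lemma le_trimmed1 {n K : ℕ} (v : Fin n → ℝ) {b : ℝ}
    (h : ∀ Λ : Finset (Fin n), Λ.card = n - K → b ≤ ∑ i ∈ Λ, |v i|) :
    b ≤ trimmed1 K v := by
  apply le_csInf
  · obtain ⟨Λ, _, hΛ⟩ := Finset.exists_subset_card_eq (s := (Finset.univ : Finset (Fin n))) (n := n - K)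
      (by simpa using Nat.sub_le n K)
    exact ⟨_, Λ, hΛ, rfl⟩
  · rintro s ⟨Λ, hΛ, rfl⟩; exact h Λ hΛ

lemma l0_card {k : ℕ} (v : Fin k → ℝ) :
    (Finset.univ.filter fun j => v j = 0).card = k - l0 v := by
  have h := Finset.card_filter_add_card_filter_not
    (s := (Finset.univ : Finset (Fin k))) (p := fun j => v j = 0)
  have h2 : (Finset.univ.filter fun j => ¬ v j = 0).card = l0 v := by
    unfold l0; congr 1
  rw [h2, Finset.card_univ, Fintype.card_fin] at h
  omega

lemma l0_le {k : ℕ} (v : Fin k → ℝ) : l0 v ≤ k := by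
  unfold l0
  simpa using Finset.card_filter_le Finset.univ (fun j => v j ≠ 0)

lemma trimmed1_eq_zero {n K : ℕ} (v : Fin n → ℝ) (h : l0 v ≤ K) :
    trimmed1 K v = 0 := by
  obtain ⟨Λ, hΛsub, hΛcard⟩ := Finset.exists_subset_card_eq
    (s := Finset.univ.filter fun j => v j = 0) (n := n - K)
    (by rw [l0_card v]; omega)
  have hz : ∑ j ∈ Λ, |v j| = 0 := Finset.sum_eq_zero fun j hj => by
    have := (Finset.mem_filter.1 (hΛsub hj)).2
    simp [this]
  have hle := trimmed1_le v hΛcard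
  rw [hz] at hle
  exact le_antisymm hle (le_trimmed1 v fun Λ' _ => Finset.sum_nonneg fun j _ => abs_nonneg _)

lemma trimmed1_update {n K : ℕ} (v : Fin n → ℝ) {i : Fin n}
    (hmin : ∀ j, v j ≠ 0 → |v i| ≤ |v j|)
    (hcount : K < l0 v) {ς : ℝ} (hς0 : 0 ≤ ς) (hς1 : ς ≤ 1) :
    trimmed1 K (Function.update v i ((1 - ς) * v i)) = trimmed1 K v - ς * |v i| := by
  set v' := Function.update v i ((1 - ς) * v i) with hv'
  have hln : l0 v ≤ n := l0_le v
  have habs : |v' i| = |v i| - ς * |v i| := by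
    rw [hv', Function.update_self, abs_mul, abs_of_nonneg (by linarith : (0:ℝ) ≤ 1 - ς)]
    ring
  have hsum_mem : ∀ Λ : Finset (Fin n), i ∈ Λ →
      ∑ j ∈ Λ, |v' j| = ∑ j ∈ Λ, |v j| - ς * |v i| := by
    intro Λ hi
    rw [← Finset.sum_erase_add _ _ hi, ← Finset.sum_erase_add Λ (fun j => |v j|) hi, habs]
    have he : ∑ j ∈ Λ.erase i, |v' j| = ∑ j ∈ Λ.erase i, |v j| :=
      Finset.sum_congr rfl fun j hj => by
        rw [hv', Function.update_of_ne (Finset.ne_of_mem_erase hj)]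
    rw [he]; ring
  have hsum_not : ∀ Λ : Finset (Fin n), i ∉ Λ →
      ∑ j ∈ Λ, |v' j| = ∑ j ∈ Λ, |v j| :=
    fun Λ hi => Finset.sum_congr rfl fun j hj => by
      rw [hv', Function.update_of_ne (by rintro rfl; exact hi hj)]
  have h1 : trimmed1 K v' + ς * |v i| ≤ trimmed1 K v := by
    apply le_trimmed1
    intro Λ hΛ
    by_cases hi : i ∈ Λ
    · have hT := trimmed1_le v' hΛ
      rw [hsum_mem Λ hi] at hT
      linarith
    · obtain ⟨j, hjΛ, hj0⟩ : ∃ j ∈ Λ, v j ≠ 0 := by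
        by_contra hall
        push_neg at hall
        have hsub : Λ ⊆ Finset.univ.filter fun j => v j = 0 := fun j hj =>
          Finset.mem_filter.2 ⟨Finset.mem_univ _, hall j hj⟩
        have hcc := Finset.card_le_card hsub
        rw [hΛ, l0_card v] at hcc
        omega
      have hiE : i ∉ Λ.erase j := fun h => hi (Finset.mem_of_mem_erase h)
      have hcard' : (insert i (Λ.erase j)).card = n - K := by
        rw [Finset.card_insert_of_notMem hiE, Finset.card_erase_of_mem hjΛ, hΛ]
        omega
      have hsum' : ∑ x ∈ insert i (Λ.erase j), |v' x| = |v' i| + ∑ x ∈ Λ.erase j, |v x| := by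
        rw [Finset.sum_insert hiE]
        congr 1
        exact Finset.sum_congr rfl fun m hm => by
          rw [hv', Function.update_of_ne (by rintro rfl; exact hiE hm)]
      have hsumΛ : ∑ x ∈ Λ.erase j, |v x| = ∑ x ∈ Λ, |v x| - |v j| := by
        rw [← Finset.sum_erase_add _ _ hjΛ]; ring
      have hT := trimmed1_le v' hcard'
      have hij := hmin j hj0
      rw [hsum', hsumΛ, habs] at hT
      linarith
  have h2 : trimmed1 K v - ς * |v i| ≤ trimmed1 K v' := by
    apply le_trimmed1
    intro Λ hΛ
    by_cases hi : i ∈ Λ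
    · rw [hsum_mem Λ hi]
      have hT := trimmed1_le v hΛ
      linarith
    · rw [hsum_not Λ hi]
      have hT := trimmed1_le v hΛ
      have hnn : 0 ≤ ς * |v i| := mul_nonneg hς0 (abs_nonneg _)
      linarith
  linarith

lemma tendsto_div_pos {c : ℝ} (hc : 0 < c) :
    Tendsto (fun ς : ℝ => ς / c) (𝓝[>] 0) (𝓝[>] 0) := by
  apply tendsto_nhdsWithin_of_tendsto_nhds_of_eventually_within
  · have h : Tendsto (fun ς : ℝ => ς / c) (𝓝 0) (𝓝 (0 / c)) :=
      (continuous_id.div_const c).tendsto 0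
    rw [zero_div] at h
    exact h.mono_left nhdsWithin_le_nhds
  · exact Filter.eventually_of_mem self_mem_nhdsWithin fun ς hς => div_pos hς hc

lemma HasDDerivAt.smul_dir {E : Type*} [AddCommMonoid E] [Module ℝ E] {f : E → ℝ}
    {x d : E} {A c : ℝ} (hc : 0 < c) (h : HasDDerivAt f x d A) :
    HasDDerivAt f x (c⁻¹ • d) (A / c) := by
  unfold HasDDerivAt at h ⊢
  have h2 := (h.comp (tendsto_div_pos hc)).div_const c
  refine h2.congr fun ς => ?_
  show (f (x + (ς / c) • d) - f x) / (ς / c) / c = (f (x + ς • c⁻¹ • d) - f x) / ς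
  rw [smul_smul, ← div_eq_mul_inv, div_div, div_mul_cancel₀ _ hc.ne']

/-- Exact penalty at d-stationary points of the trimmed lasso with an additional
constraint set `C`. -/
theorem stmt15 {n0 L : ℕ} {n K : Fin L → ℕ}
    (hK : ∀ l, K l < n l)
    (γ : Fin L → ℝ) (hγ : ∀ l, 0 < γ l)
    (C : Set ((Fin n0 → ℝ) × (∀ l, Fin (n l) → ℝ)))
    (f : ((Fin n0 → ℝ) × (∀ l, Fin (n l) → ℝ)) → ℝ)
    -- f is directionally differentiable on C, with derivative df
    (df : ((Fin n0 → ℝ) × (∀ l, Fin (n l) → ℝ)) →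
      ((Fin n0 → ℝ) × (∀ l, Fin (n l) → ℝ)) → ℝ)
    (hdf : ∀ x ∈ C, ∀ d ∈ feasCone C x, HasDDerivAt f x d (df x d))
    (F : ((Fin n0 → ℝ) × (∀ l, Fin (n l) → ℝ)) → ℝ)
    (hF : ∀ x, F x = f x + ∑ l, γ l * trimmed1 (K l) (x.2 l))
    (xstar : (Fin n0 → ℝ) × (∀ l, Fin (n l) → ℝ)) (hxC : xstar ∈ C)
    -- x* is a d-stationary point of the constrained problem
    (hstat : ∀ d ∈ feasCone C xstar, ∀ Ld : ℝ, HasDDerivAt F xstar d Ld → 0 ≤ Ld)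
    (l : Fin L)
    -- (B1)
    (hB1 : ∀ x ∈ C, ∀ i : Fin (n l),
      ((0 : Fin n0 → ℝ),
        Function.update (0 : ∀ l', Fin (n l') → ℝ) l
          (fun j => if j = i then -(x.2 l i) else 0)) ∈ feasCone C x)
    -- (B2)
    (Γ : ℝ) (hΓ : 0 < Γ)
    (hB2 : ∀ dl : Fin (n l) → ℝ,
      (∀ j, dl j = -1 ∨ dl j = 0 ∨ dl j = 1) → (∑ j, |dl j|) = 1 →
      ((0 : Fin n0 → ℝ), Function.update (0 : ∀ l', Fin (n l') → ℝ) l dl)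
        ∈ feasCone C xstar →
      df xstar ((0 : Fin n0 → ℝ), Function.update (0 : ∀ l', Fin (n l') → ℝ) l dl) ≤ Γ)
    (hγl : γ l > Γ) :
    trimmed1 (K l) (xstar.2 l) = 0 ∧ l0 (xstar.2 l) ≤ K l := by
  classical
  have hmain : l0 (xstar.2 l) ≤ K l := by
    by_contra hcon
    push_neg at hcon
    set v : Fin (n l) → ℝ := xstar.2 l with hvdef
    -- choose a nonzero coordinate of minimal absolute value
    have hS : (Finset.univ.filter fun j => v j ≠ 0).Nonempty := by
      rw [← Finset.card_pos]
      have : 0 < l0 v := by omega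
      exact this
    obtain ⟨i, hiS, hminS⟩ := Finset.exists_min_image _ (fun j => |v j|) hS
    have hvi : v i ≠ 0 := (Finset.mem_filter.1 hiS).2
    have hmin : ∀ j, v j ≠ 0 → |v i| ≤ |v j| := fun j hj =>
      hminS j (Finset.mem_filter.2 ⟨Finset.mem_univ _, hj⟩)
    have hc : 0 < |v i| := abs_pos.2 hvi
    set dl : Fin (n l) → ℝ := fun j => if j = i then -(v i) else 0 with hdl
    set d : (Fin n0 → ℝ) × (∀ l', Fin (n l') → ℝ) :=
      ((0 : Fin n0 → ℝ), Function.update (0 : ∀ l', Fin (n l') → ℝ) l dl) with hd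
    have hd_feas : d ∈ feasCone C xstar := hB1 xstar hxC i
    -- the path
    have hpath2 : ∀ ς : ℝ, ∀ l', l' ≠ l → (xstar + ς • d).2 l' = xstar.2 l' := by
      intro ς l' hl'
      show xstar.2 l' + ς • (Function.update (0 : ∀ l', Fin (n l') → ℝ) l dl) l' = xstar.2 l'
      rw [Function.update_of_ne hl']
      simp
    have hpath3 : ∀ ς : ℝ, (xstar + ς • d).2 l = Function.update v i ((1 - ς) * v i) := by
      intro ς
      funext j
      have hstep : (xstar + ς • d).2 l j = v j + ς * dl j := by
        show xstar.2 l j + ς • (Function.update (0 : ∀ l', Fin (n l') → ℝ) l dl) l j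
          = v j + ς * dl j
        rw [Function.update_self]
        rfl
      rw [hstep]
      have hdlj : dl j = if j = i then -(v i) else 0 := rfl
      by_cases hj : j = i
      · subst hj
        rw [Function.update_self, hdlj, if_pos rfl]
        ring
      · rw [Function.update_of_ne hj, hdlj, if_neg hj]
        ring
    -- value of F along the path
    have hFval : ∀ ς ∈ Set.Ioo (0:ℝ) 1,
        F (xstar + ς • d) - F xstar
          = f (xstar + ς • d) - f xstar - ς * (γ l * |v i|) := by
      intro ς hς
      rw [hF, hF]
      have key : ∑ l', (γ l' * trimmed1 (K l') ((xstar + ς • d).2 l')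
          - γ l' * trimmed1 (K l') (xstar.2 l')) = -(ς * (γ l * |v i|)) := by
        rw [Finset.sum_eq_single l]
        · rw [hpath3 ς, trimmed1_update v hmin hcon hς.1.le hς.2.le]
          ring
        · intro l' _ hl'
          rw [hpath2 ς l' hl']
          ring
        · intro h; exact absurd (Finset.mem_univ l) h
      rw [Finset.sum_sub_distrib] at key
      linarith
    -- directional derivative of F
    have hfd : Tendsto (fun ς : ℝ => (f (xstar + ς • d) - f xstar) / ς)
        (𝓝[>] 0) (𝓝 (df xstar d)) := hdf xstar hxC d hd_feas
    have hFd : HasDDerivAt F xstar d (df xstar d - γ l * |v i|) := by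
      unfold HasDDerivAt
      have ht := hfd.sub_const (γ l * |v i|)
      refine ht.congr' ?_
      filter_upwards [Ioo_mem_nhdsGT_of_mem (Set.left_mem_Ico.2 one_pos)] with ς hς
      have hςne : ς ≠ 0 := ne_of_gt hς.1
      rw [hFval ς hς]
      field_simp
    have h0le : 0 ≤ df xstar d - γ l * |v i| := hstat d hd_feas _ hFd
    -- the unit direction
    set ul : Fin (n l) → ℝ := fun j => if j = i then -(v i) / |v i| else 0 with hul
    set u : (Fin n0 → ℝ) × (∀ l', Fin (n l') → ℝ) :=
      ((0 : Fin n0 → ℝ), Function.update (0 : ∀ l', Fin (n l') → ℝ) l ul) with hu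
    have hdu : d = |v i| • u := by
      rw [hd, hu, Prod.smul_mk]
      congr 1
      · rw [smul_zero]
      · funext l' j
        rw [Pi.smul_apply, Pi.smul_apply]
        by_cases hl' : l' = l
        · subst hl'
          rw [Function.update_self, Function.update_self]
          show (if j = i then -(v i) else 0)
            = |v i| * if j = i then -(v i) / |v i| else 0
          by_cases hj : j = i
          · rw [if_pos hj, if_pos hj, mul_comm, div_mul_cancel₀ _ hc.ne']
          · rw [if_neg hj, if_neg hj, mul_zero]
        · rw [Function.update_of_ne hl', Function.update_of_ne hl']
          show (0 : ℝ) = |v i| * 0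
          rw [mul_zero]
    have hdu' : |v i|⁻¹ • d = u := by rw [hdu, inv_smul_smul₀ hc.ne']
    have hu_feas : u ∈ feasCone C xstar := by
      have h := feasCone_smul (inv_pos.2 hc) hd_feas
      rwa [hdu'] at h
    have hfu : Tendsto (fun ς : ℝ => (f (xstar + ς • u) - f xstar) / ς)
        (𝓝[>] 0) (𝓝 (df xstar u)) := hdf xstar hxC u hu_feas
    have hfu' : HasDDerivAt f xstar u (df xstar d / |v i|) := by
      have h := HasDDerivAt.smul_dir hc (hdf xstar hxC d hd_feas)
      rwa [hdu'] at h
    have huniq : df xstar u = df xstar d / |v i| := tendsto_nhds_unique hfu hfu'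
    have hulj : ∀ j', ul j' = if j' = i then -(v i) / |v i| else 0 := fun _ => rfl
    have hsign : ∀ j, ul j = -1 ∨ ul j = 0 ∨ ul j = 1 := by
      intro j
      by_cases hj : j = i
      · rw [hulj, if_pos hj]
        rcases hvi.lt_or_gt with h | h
        · right; right
          rw [abs_of_neg h, div_self (neg_ne_zero.2 hvi)]
        · left
          rw [abs_of_pos h, neg_div, div_self hvi]
      · right; left; rw [hulj, if_neg hj]
    have hsum1 : (∑ j, |ul j|) = 1 := by
      have hone : ∑ j, |ul j| = |ul i| := Finset.sum_eq_single i
        (fun j _ hj => by rw [hulj, if_neg hj, abs_zero])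
        (fun h => absurd (Finset.mem_univ i) h)
      rw [hone, hulj, if_pos rfl, abs_div, abs_neg, abs_abs, div_self hc.ne']
    have hB2u : df xstar u ≤ Γ := hB2 ul hsign hsum1 hu_feas
    rw [huniq] at hB2u
    have hdd : df xstar d ≤ |v i| * Γ := by
      have h := mul_le_mul_of_nonneg_left hB2u hc.le
      rwa [mul_comm (|v i|) _, div_mul_cancel₀ _ hc.ne'] at h
    nlinarith [mul_pos (sub_pos.2 hγl) hc]
  exact ⟨trimmed1_eq_zero _ hmain, hmain⟩
end

section
/- Let A = (a₁, …, a_q) ∈ ℝ^{p×n} be a nonnegative matrix, η₁ > 0, η₂ > 0, γ > 0, and consider the penalized nonnegative matrix factorization problem: minimize F(W, X) := (1/2)‖A − WX‖_F² + (η₁/2)‖W‖_F² + (η₂/2)‖X‖_F² + γ Σ_{j∈[q]} T_{1,n,1}(x_j) over the set C = {(W, X) ∈ ℝ^{p×n} × ℝ^{n×q} : W ≥ 0 entrywise, X ≥ 0 entrywise}, where x_j denotes the j-th column of X. Let (W*, X*) be a d-stationary point of this problem. If γ > max_{j∈[q]} (‖a_j‖₂/√2)·(‖A‖_F/√η₁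 + √η₂), then T_{1,n,1}(x_j*) = 0 for all j ∈ [q], i.e., every column of X* has at most one nonzero entry. -/
open Filter Topology Matrix

/-- ℓ₂ norm of a vector. -/
noncomputable def l2 {k : ℕ} (v : Fin k → ℝ) : ℝ := Real.sqrt (∑ j, v j ^ 2)

/-- Frobenius norm of a matrix. -/
noncomputable def frobNorm {a b : ℕ} (A : Matrix (Fin a) (Fin b) ℝ) : ℝ :=
  Real.sqrt (∑ i, ∑ j, A i j ^ 2)

lemma trimmed1_set_nonempty {n : ℕ} (K : ℕ) (v : Fin n → ℝ) :
    {s : ℝ | ∃ Λ : Finset (Fin n), Λ.card = n - K ∧ s = ∑ i ∈ Λ, |v i|}.Nonempty := by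
  obtain ⟨Λ, -, hΛ⟩ := Finset.exists_subset_card_eq
    (s := (Finset.univ : Finset (Fin n))) (n := n - K) (by simpa using Nat.sub_le n K)
  exact ⟨∑ i ∈ Λ, |v i|, Λ, hΛ, rfl⟩

lemma trimmed1_set_bddBelow {n : ℕ} (K : ℕ) (v : Fin n → ℝ) :
    BddBelow {s : ℝ | ∃ Λ : Finset (Fin n), Λ.card = n - K ∧ s = ∑ i ∈ Λ, |v i|} := by
  refine ⟨0, fun s hs => ?_⟩
  obtain ⟨Λ, -, rfl⟩ := hs
  exact Finset.sum_nonneg fun i _ => abs_nonneg _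

lemma trimmed1_nonneg {n : ℕ} (K : ℕ) (v : Fin n → ℝ) : 0 ≤ trimmed1 K v :=
  le_csInf (trimmed1_set_nonempty K v) (fun s hs => by
    obtain ⟨Λ, -, rfl⟩ := hs; exact Finset.sum_nonneg fun i _ => abs_nonneg _)

lemma trimmed1_smul {n : ℕ} (K : ℕ) (v : Fin n → ℝ) {c : ℝ} (hc : 0 < c) :
    trimmed1 K (fun i => c * v i) = c * trimmed1 K v := by
  unfold trimmed1
  have habs : ∀ Λ : Finset (Fin n), ∑ i ∈ Λ, |c * v i| = c * ∑ i ∈ Λ, |v i| := by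
    intro Λ
    rw [Finset.mul_sum]
    exact Finset.sum_congr rfl fun i _ => by rw [abs_mul, abs_of_pos hc]
  apply le_antisymm
  · rw [show c * sInf {s : ℝ | ∃ Λ : Finset (Fin n), Λ.card = n - K ∧ s = ∑ i ∈ Λ, |v i|}
      = sInf {s | ∃ Λ : Finset (Fin n), Λ.card = n - K ∧ s = ∑ i ∈ Λ, |v i|} * c from (mul_comm _ _)]
    rw [← div_le_iff₀ hc]
    apply le_csInf (trimmed1_set_nonempty K v)
    rintro s ⟨Λ, hΛ, rfl⟩
    rw [div_le_iff₀ hc, mul_comm, ← habs]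
    exact csInf_le (trimmed1_set_bddBelow K _) ⟨Λ, hΛ, rfl⟩
  · apply le_csInf (trimmed1_set_nonempty K _)
    rintro s ⟨Λ, hΛ, rfl⟩
    rw [habs]
    exact mul_le_mul_of_nonneg_left (csInf_le (trimmed1_set_bddBelow K v) ⟨Λ, hΛ, rfl⟩) hc.le

lemma trimmed1_eq_zero_of_l0_le_one {n : ℕ} (v : Fin n → ℝ)
    (h : ((Finset.univ.filter fun i => v i ≠ 0)).card ≤ 1) : trimmed1 1 v = 0 := by
  obtain ⟨Λ, hcard, hzero⟩ : ∃ Λ : Finset (Fin n), Λ.card = n - 1 ∧ ∀ k ∈ Λ, v k = 0 := by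
    by_cases hz : ∃ i₀, v i₀ ≠ 0
    · obtain ⟨i₀, hi₀⟩ := hz
      refine ⟨Finset.univ.erase i₀, by simp, fun k hk => ?_⟩
      by_contra hvk
      have h1 : k ∈ Finset.univ.filter fun i => v i ≠ 0 := by simp [hvk]
      have h2 : i₀ ∈ Finset.univ.filter fun i => v i ≠ 0 := by simp [hi₀]
      exact (Finset.mem_erase.mp hk).1 (Finset.card_le_one.mp h k h1 i₀ h2)
    · push_neg at hz
      obtain ⟨Λ, -, hΛ⟩ := Finset.exists_subset_card_eq
        (s := (Finset.univ : Finset (Fin n))) (n := n - 1) (by simpa using Nat.sub_le n 1)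
      exact ⟨Λ, hΛ, fun k _ => hz k⟩
  have hmem : (0 : ℝ) ∈ {s : ℝ | ∃ Λ : Finset (Fin n), Λ.card = n - 1 ∧ s = ∑ i ∈ Λ, |v i|} :=
    ⟨Λ, hcard, by rw [Finset.sum_congr rfl fun i hi => by rw [hzero i hi, abs_zero], Finset.sum_const, smul_zero]⟩
  exact le_antisymm (csInf_le (trimmed1_set_bddBelow 1 v) hmem) (trimmed1_nonneg 1 v)

lemma trimmed1_formula {n : ℕ} (v : Fin n → ℝ) (hv : ∀ k, 0 ≤ v k) (i₀ : Fin n) :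
    trimmed1 1 v = (∑ k, v k) - Finset.univ.sup' ⟨i₀, Finset.mem_univ i₀⟩ v := by
  set H : (Finset.univ : Finset (Fin n)).Nonempty := ⟨i₀, Finset.mem_univ i₀⟩
  have habs : ∀ Λ : Finset (Fin n), ∑ i ∈ Λ, |v i| = ∑ i ∈ Λ, v i :=
    fun Λ => Finset.sum_congr rfl fun i _ => abs_of_nonneg (hv i)
  apply le_antisymm
  · obtain ⟨k, -, hk⟩ := Finset.exists_mem_eq_sup' H v
    apply csInf_le (trimmed1_set_bddBelow 1 v)
    refine ⟨Finset.univ.erase k, by simp, ?_⟩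
    rw [habs, hk, sub_eq_iff_eq_add]
    exact (Finset.sum_erase_add _ _ (Finset.mem_univ k)).symm
  · apply le_csInf (trimmed1_set_nonempty 1 v)
    rintro s ⟨Λ, hΛ, rfl⟩
    rw [habs]
    have hn : 0 < n := i₀.pos
    have hc : Λᶜ.card = 1 := by
      rw [Finset.card_compl, hΛ]
      simp only [Fintype.card_fin]
      omega
    obtain ⟨k₀, hk₀⟩ := Finset.card_eq_one.mp hc
    have hΛeq : Λ = Finset.univ.erase k₀ := by
      rw [← Finset.compl_singleton, ← hk₀, compl_compl]
    rw [hΛeq, sub_le_iff_le_add, ← Finset.sum_erase_add _ _ (Finset.mem_univ k₀)]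
    have : v k₀ ≤ Finset.univ.sup' H v := Finset.le_sup' v (Finset.mem_univ k₀)
    linarith

lemma trimmed1_perturb {n : ℕ} (v : Fin n → ℝ) (hv : ∀ k, 0 ≤ v k) {i i' : Fin n}
    (hne : i ≠ i') (hle : v i ≤ v i') {ς : ℝ} (h0 : 0 ≤ ς) (h1 : ς ≤ 1) :
    trimmed1 1 (fun k => v k + ς * (if k = i then -(v i) else 0))
      = trimmed1 1 v - ς * v i := by
  set v' : Fin n → ℝ := fun k => v k + ς * (if k = i then -(v i) else 0) with hv'
  have hv'i : v' i = (1 - ς) * v i := by simp [hv']; ring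
  have hv'k : ∀ k, k ≠ i → v' k = v k := fun k hk => by simp [hv', hk]
  have hv'nn : ∀ k, 0 ≤ v' k := by
    intro k
    by_cases hk : k = i
    · rw [hk, hv'i]; exact mul_nonneg (by linarith) (hv i)
    · rw [hv'k k hk]; exact hv k
  have H : (Finset.univ : Finset (Fin n)).Nonempty := ⟨i, Finset.mem_univ i⟩
  rw [trimmed1_formula v hv i, trimmed1_formula v' hv'nn i]
  have hsum : ∑ k, v' k = (∑ k, v k) - ς * v i := by
    rw [eq_sub_iff_add_eq, ← Finset.sum_erase_add _ v' (Finset.mem_univ i),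
      ← Finset.sum_erase_add _ v (Finset.mem_univ i),
      Finset.sum_congr rfl fun k hk => hv'k k (Finset.mem_erase.mp hk).1, hv'i]
    ring
  have hsup : Finset.univ.sup' H v' = Finset.univ.sup' H v := by
    apply le_antisymm
    · apply Finset.sup'_le
      intro k _
      by_cases hk : k = i
      · rw [hk, hv'i]
        calc (1 - ς) * v i ≤ 1 * v i := by
              apply mul_le_mul_of_nonneg_right (by linarith) (hv i)
          _ = v i := one_mul _
          _ ≤ _ := Finset.le_sup' v (Finset.mem_univ i)
      · rw [hv'k k hk]; exact Finset.le_sup' v (Finset.mem_univ k)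
    · obtain ⟨k, -, hk⟩ := Finset.exists_mem_eq_sup' H v
      rw [hk]
      by_cases hki : k = i
      · subst hki
        have h2 : v k ≤ v i' := hle
        have h3 : v i' ≤ v k := hk ▸ Finset.le_sup' v (Finset.mem_univ i')
        have : v k = v' i' := by rw [hv'k i' (Ne.symm hne)]; linarith
        rw [this]
        exact Finset.le_sup' v' (Finset.mem_univ i')
      · rw [← hv'k k hki]
        exact Finset.le_sup' v' (Finset.mem_univ k)
  rw [hsum, hsup]
  ring

lemma hasDDeriv_of_poly {E : Type*} [AddCommMonoid E] [SMul ℝ E] (f : E → ℝ) (x d : E)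
    (c₁ c₂ c₃ c₄ : ℝ)
    (h : ∀ ς : ℝ, 0 < ς → ς < 1 →
      f (x + ς • d) = f x + ς * c₁ + ς ^ 2 * c₂ + ς ^ 3 * c₃ + ς ^ 4 * c₄) :
    HasDDerivAt f x d c₁ := by
  unfold HasDDerivAt
  have hmem : Set.Ioo (0 : ℝ) 1 ∈ nhdsWithin 0 (Set.Ioi 0) :=
    Ioo_mem_nhdsGT_of_mem ⟨le_refl 0, one_pos⟩
  have heq : (fun ς : ℝ => c₁ + ς * c₂ + ς ^ 2 * c₃ + ς ^ 3 * c₄)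
      =ᶠ[nhdsWithin 0 (Set.Ioi 0)] fun ς : ℝ => (f (x + ς • d) - f x) / ς := by
    filter_upwards [hmem] with ς hς
    rw [h ς hς.1 hς.2, eq_div_iff hς.1.ne']
    ring
  refine Filter.Tendsto.congr' heq ?_
  have hc : Continuous fun ς : ℝ => c₁ + ς * c₂ + ς ^ 2 * c₃ + ς ^ 3 * c₄ := by continuity
  exact (hc.tendsto' 0 c₁ (by norm_num)).mono_left nhdsWithin_le_nhds

lemma sum_mul_le_sqrt {ι : Type*} [Fintype ι] (f g : ι → ℝ) :
    ∑ i, f i * g i ≤ Real.sqrt (∑ i, f i ^ 2) * Real.sqrt (∑ i, g i ^ 2) := by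
  have h := Finset.sum_mul_sq_le_sq_mul_sq Finset.univ f g
  calc ∑ i, f i * g i ≤ |∑ i, f i * g i| := le_abs_self _
    _ = Real.sqrt ((∑ i, f i * g i) ^ 2) := (Real.sqrt_sq_eq_abs _).symm
    _ ≤ Real.sqrt ((∑ i, f i ^ 2) * ∑ i, g i ^ 2) := Real.sqrt_le_sqrt h
    _ = _ := Real.sqrt_mul (Finset.sum_nonneg fun i _ => sq_nonneg _) _

set_option maxHeartbeats 1000000 in
/-- Exact penalty for clustering by penalized nonnegative matrix factorization. -/
theorem stmt17 {p n q : ℕ}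
    (A : Matrix (Fin p) (Fin q) ℝ) (hA : ∀ i j, 0 ≤ A i j)
    (η₁ η₂ γ : ℝ) (hη₁ : 0 < η₁) (hη₂ : 0 < η₂) (hγ : 0 < γ)
    (C : Set (Matrix (Fin p) (Fin n) ℝ × Matrix (Fin n) (Fin q) ℝ))
    (hC : C = {WX | (∀ i j, 0 ≤ WX.1 i j) ∧ ∀ i j, 0 ≤ WX.2 i j})
    (F : (Matrix (Fin p) (Fin n) ℝ × Matrix (Fin n) (Fin q) ℝ) → ℝ)
    (hF : ∀ WX, F WX =
      (1 / 2) * ∑ i, ∑ j, (A i j - (WX.1 * WX.2) i j) ^ 2 +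
      (η₁ / 2) * ∑ i, ∑ j, WX.1 i j ^ 2 +
      (η₂ / 2) * ∑ i, ∑ j, WX.2 i j ^ 2 +
      γ * ∑ j, trimmed1 1 (fun i => WX.2 i j))
    (WXstar : Matrix (Fin p) (Fin n) ℝ × Matrix (Fin n) (Fin q) ℝ)
    (hWX : WXstar ∈ C)
    -- (W*, X*) is a d-stationary point
    (hstat : ∀ d ∈ feasCone C WXstar, ∀ Ld : ℝ, HasDDerivAt F WXstar d Ld → 0 ≤ Ld)
    -- γ > max_j (‖a_j‖₂/√2)(‖A‖_F/√η₁ + √η₂)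
    (hthr : ∀ j : Fin q,
      γ > l2 (fun i => A i j) / Real.sqrt 2 *
        (frobNorm A / Real.sqrt η₁ + Real.sqrt η₂)) :
    ∀ j : Fin q, trimmed1 1 (fun i => WXstar.2 i j) = 0 ∧
      l0 (fun i => WXstar.2 i j) ≤ 1 := by
  obtain ⟨W, X⟩ := WXstar
  have hWX' := hWX
  rw [hC] at hWX'
  obtain ⟨hW, hX⟩ := hWX'
  simp only at hW hX
  -- basic notations
  have hB : ∀ a b, 0 ≤ (W * X) a b := fun a b => by
    rw [Matrix.mul_apply]
    exact Finset.sum_nonneg fun m _ => mul_nonneg (hW a m) (hX m b)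
  have hXcolnn : ∀ j' : Fin q, 0 ≤ trimmed1 1 (fun k => X k j') :=
    fun j' => trimmed1_nonneg 1 _
  ------------------------------------------------------------------
  -- Step 1 : the scaling direction gives  η₁ * ∑∑W² ≤ 2 * SRB
  ------------------------------------------------------------------
  have hd2mem : ((-W, -X) : Matrix (Fin p) (Fin n) ℝ × Matrix (Fin n) (Fin q) ℝ)
      ∈ feasCone C (W, X) := by
    refine ⟨hWX, 1, one_pos, fun ς h0 h1 => ?_⟩
    rw [hC]
    constructor
    · intro a b
      simp only [Prod.fst_add, Prod.smul_fst, Matrix.add_apply, Matrix.smul_apply,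
        Matrix.neg_apply, smul_eq_mul]
      nlinarith [hW a b]
    · intro a b
      simp only [Prod.snd_add, Prod.smul_snd, Matrix.add_apply, Matrix.smul_apply,
        Matrix.neg_apply, smul_eq_mul]
      nlinarith [hX a b]
  have hpt2 : ∀ ς : ℝ, ((W, X) : Matrix (Fin p) (Fin n) ℝ × Matrix (Fin n) (Fin q) ℝ)
      + ς • ((-W, -X) : Matrix (Fin p) (Fin n) ℝ × Matrix (Fin n) (Fin q) ℝ)
      = ((1 - ς) • W, (1 - ς) • X) := by
    intro ς
    rw [Prod.ext_iff]
    constructor <;> simp only [Prod.fst_add, Prod.smul_fst, Prod.snd_add, Prod.smul_snd] <;>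
      module
  have hL2 : HasDDerivAt F (W, X) ((-W, -X))
      (2 * (∑ a, ∑ b, (A a b - (W * X) a b) * ((W * X) a b))
        - η₁ * (∑ a, ∑ b, W a b ^ 2) - η₂ * (∑ a, ∑ b, X a b ^ 2)
        - γ * (∑ j', trimmed1 1 fun k => X k j')) := by
    apply hasDDeriv_of_poly F (W, X) _ _
      ((∑ a, ∑ b, ((W * X) a b) ^ 2) * 2
        + (-1) * (∑ a, ∑ b, (A a b - (W * X) a b) * ((W * X) a b))
        + η₁ / 2 * (∑ a, ∑ b, W a b ^ 2) + η₂ / 2 * (∑ a, ∑ b, X a b ^ 2))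
      ((-2) * (∑ a, ∑ b, ((W * X) a b) ^ 2))
      ((∑ a, ∑ b, ((W * X) a b) ^ 2) / 2)
    intro ς h0 h1
    rw [hpt2 ς]
    simp only [hF]
    have hmul : ∀ a b, (((1 - ς) • W) * ((1 - ς) • X)) a b
        = (1 - ς) * ((1 - ς) * (W * X) a b) := by
      intro a b
      simp [Matrix.smul_mul, Matrix.mul_smul, Matrix.smul_apply, smul_eq_mul]
    have E1 : ∑ a, ∑ b, (A a b - (((1 - ς) • W) * ((1 - ς) • X)) a b) ^ 2
        = (∑ a, ∑ b, (A a b - (W * X) a b) ^ 2)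
          + ς * (4 * ∑ a, ∑ b, (A a b - (W * X) a b) * ((W * X) a b))
          + ς ^ 2 * (4 * ∑ a, ∑ b, ((W * X) a b) ^ 2)
          + ς ^ 2 * ((-2) * ∑ a, ∑ b, (A a b - (W * X) a b) * ((W * X) a b))
          + ς ^ 3 * ((-4) * ∑ a, ∑ b, ((W * X) a b) ^ 2)
          + ς ^ 4 * (∑ a, ∑ b, ((W * X) a b) ^ 2) := by
      rw [Finset.sum_congr rfl fun a _ => Finset.sum_congr rfl fun b _ =>
        (by rw [hmul a b]; ring :
          (A a b - (((1 - ς) • W) * ((1 - ς) • X)) a b) ^ 2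
          = (A a b - (W * X) a b) ^ 2
            + ς * (4 * ((A a b - (W * X) a b) * ((W * X) a b)))
            + ς ^ 2 * (4 * (((W * X) a b) ^ 2))
            + ς ^ 2 * ((-2) * ((A a b - (W * X) a b) * ((W * X) a b)))
            + ς ^ 3 * ((-4) * (((W * X) a b) ^ 2))
            + ς ^ 4 * (((W * X) a b) ^ 2))]
      simp only [Finset.sum_add_distrib, ← Finset.mul_sum]
    have E2 : ∑ a, ∑ b, (((1 - ς) • W) a b) ^ 2
        = (∑ a, ∑ b, W a b ^ 2) + ς * ((-2) * ∑ a, ∑ b, W a b ^ 2)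
          + ς ^ 2 * (∑ a, ∑ b, W a b ^ 2) := by
      rw [Finset.sum_congr rfl fun a _ => Finset.sum_congr rfl fun b _ =>
        (by simp [Matrix.smul_apply, smul_eq_mul]; ring :
          (((1 - ς) • W) a b) ^ 2
          = W a b ^ 2 + ς * ((-2) * (W a b ^ 2)) + ς ^ 2 * (W a b ^ 2))]
      simp only [Finset.sum_add_distrib, ← Finset.mul_sum]
    have E3 : ∑ a, ∑ b, (((1 - ς) • X) a b) ^ 2
        = (∑ a, ∑ b, X a b ^ 2) + ς * ((-2) * ∑ a, ∑ b, X a b ^ 2)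
          + ς ^ 2 * (∑ a, ∑ b, X a b ^ 2) := by
      rw [Finset.sum_congr rfl fun a _ => Finset.sum_congr rfl fun b _ =>
        (by simp [Matrix.smul_apply, smul_eq_mul]; ring :
          (((1 - ς) • X) a b) ^ 2
          = X a b ^ 2 + ς * ((-2) * (X a b ^ 2)) + ς ^ 2 * (X a b ^ 2))]
      simp only [Finset.sum_add_distrib, ← Finset.mul_sum]
    have Et : ∑ j', trimmed1 1 (fun k => ((1 - ς) • X) k j')
        = (1 - ς) * ∑ j', trimmed1 1 (fun k => X k j') := by
      rw [Finset.mul_sum]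
      refine Finset.sum_congr rfl fun j' _ => ?_
      have hcol : (fun k => ((1 - ς) • X) k j') = fun k => (1 - ς) * X k j' := by
        funext k; simp [Matrix.smul_apply, smul_eq_mul]
      rw [hcol, trimmed1_smul 1 _ (by linarith : (0:ℝ) < 1 - ς)]
    rw [E1, E2, E3, Et]
    ring
  have hstat2 := hstat _ hd2mem _ hL2
  -- Cauchy–Schwarz for the pairing of A with W*X
  have hAB : ∑ a, ∑ b, A a b * ((W * X) a b)
      ≤ Real.sqrt (∑ a, ∑ b, A a b ^ 2) * Real.sqrt (∑ a, ∑ b, ((W * X) a b) ^ 2) := by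
    have h := sum_mul_le_sqrt (fun x : Fin p × Fin q => A x.1 x.2)
      (fun x : Fin p × Fin q => (W * X) x.1 x.2)
    simpa [Fintype.sum_prod_type] using h
  have hSRB : ∑ a, ∑ b, (A a b - (W * X) a b) * ((W * X) a b)
      = (∑ a, ∑ b, A a b * ((W * X) a b)) - ∑ a, ∑ b, ((W * X) a b) ^ 2 := by
    rw [← Finset.sum_sub_distrib]
    refine Finset.sum_congr rfl fun a _ => ?_
    rw [← Finset.sum_sub_distrib]
    exact Finset.sum_congr rfl fun b _ => by ring
  have hWbound : η₁ * (∑ a, ∑ b, W a b ^ 2) ≤ (∑ a, ∑ b, A a b ^ 2) / 2 := by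
    have hX2 : 0 ≤ ∑ a, ∑ b, X a b ^ 2 :=
      Finset.sum_nonneg fun a _ => Finset.sum_nonneg fun b _ => sq_nonneg _
    have hT : 0 ≤ ∑ j', trimmed1 1 fun k => X k j' :=
      Finset.sum_nonneg fun j' _ => hXcolnn j'
    have hsq1 : 0 ≤ ∑ a, ∑ b, A a b ^ 2 :=
      Finset.sum_nonneg fun a _ => Finset.sum_nonneg fun b _ => sq_nonneg _
    have hsq2 : 0 ≤ ∑ a, ∑ b, ((W * X) a b) ^ 2 :=
      Finset.sum_nonneg fun a _ => Finset.sum_nonneg fun b _ => sq_nonneg _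
    have hs1 := Real.sq_sqrt hsq1
    have hs2 := Real.sq_sqrt hsq2
    nlinarith [sq_nonneg (Real.sqrt (∑ a, ∑ b, A a b ^ 2)
      - 2 * Real.sqrt (∑ a, ∑ b, ((W * X) a b) ^ 2)),
      Real.sqrt_nonneg (∑ a, ∑ b, A a b ^ 2),
      Real.sqrt_nonneg (∑ a, ∑ b, ((W * X) a b) ^ 2),
      mul_nonneg hη₂.le hX2, mul_nonneg hγ.le hT]
  ------------------------------------------------------------------
  -- Step 2 : columns with ≥ 2 nonzero entries are impossible
  ------------------------------------------------------------------
  intro j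
  suffices hcard : ((Finset.univ.filter fun i => X i j ≠ 0)).card ≤ 1 by
    refine ⟨trimmed1_eq_zero_of_l0_le_one _ hcard, ?_⟩
    simpa [l0] using hcard
  by_contra hcard
  push_neg at hcard
  have hcard' : 1 < ((Finset.univ.filter fun i => X i j ≠ 0)).card := hcard
  obtain ⟨i₁, hi₁, i₂, hi₂, hi₁₂⟩ := Finset.one_lt_card.mp hcard'
  simp only [Finset.mem_filter, Finset.mem_univ, true_and] at hi₁ hi₂
  have key : ∀ i i' : Fin n, i ≠ i' → X i j ≠ 0 → X i' j ≠ 0 → X i j ≤ X i' j → False := by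
    intro i i' hne hXi hXi' hle
    have he : 0 < X i j := lt_of_le_of_ne (hX i j) (Ne.symm hXi)
    -- the direction decreasing entry (i, j) of X
    set Emat : Matrix (Fin n) (Fin q) ℝ :=
      fun a b => if a = i then (if b = j then -(X i j) else 0) else 0 with hEmat
    have hd1mem : ((0, Emat) : Matrix (Fin p) (Fin n) ℝ × Matrix (Fin n) (Fin q) ℝ)
        ∈ feasCone C (W, X) := by
      refine ⟨hWX, 1, one_pos, fun ς h0 h1 => ?_⟩
      rw [hC]
      constructor
      · intro a b
        simp only [Prod.fst_add, Prod.smul_fst, Matrix.add_apply, Matrix.smul_apply,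
          Matrix.zero_apply, smul_eq_mul, mul_zero, add_zero]
        exact hW a b
      · intro a b
        simp only [Prod.snd_add, Prod.smul_snd, Matrix.add_apply, Matrix.smul_apply,
          smul_eq_mul]
        simp only [hEmat]
        split_ifs with h1' h2'
        · subst h1'; subst h2'; nlinarith [hX a b]
        · simpa using hX a b
        · simpa using hX a b
    have hpt1 : ∀ ς : ℝ, ((W, X) : Matrix (Fin p) (Fin n) ℝ × Matrix (Fin n) (Fin q) ℝ)
        + ς • ((0, Emat) : Matrix (Fin p) (Fin n) ℝ × Matrix (Fin n) (Fin q) ℝ)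
        = (W, X + ς • Emat) := by
      intro ς
      rw [Prod.ext_iff]
      constructor
      · simp only [Prod.fst_add, Prod.smul_fst, smul_zero, add_zero]
      · simp only [Prod.snd_add, Prod.smul_snd]
    have hG : ∀ a b, (W * Emat) a b = if b = j then -(W a i * X i j) else 0 := by
      intro a b
      rw [Matrix.mul_apply]
      simp only [hEmat, mul_ite, mul_zero, mul_neg]
      rw [Finset.sum_ite_eq' Finset.univ i
        (fun m => if b = j then -(W a m * X i j) else 0)]
      simp
    have hL1 : HasDDerivAt F (W, X) ((0, Emat))
        (-(∑ a, ∑ b, (A a b - (W * X) a b) * ((W * Emat) a b))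
          + η₂ * (∑ a, ∑ b, X a b * Emat a b) - γ * X i j) := by
      apply hasDDeriv_of_poly F (W, X) _ _
        ((1 / 2) * (∑ a, ∑ b, ((W * Emat) a b) ^ 2)
          + η₂ / 2 * (∑ a, ∑ b, Emat a b ^ 2))
        0 0
      intro ς h0 h1
      rw [hpt1 ς]
      simp only [hF]
      have hmul : ∀ a b, (W * (X + ς • Emat)) a b = (W * X) a b + ς * (W * Emat) a b := by
        intro a b
        rw [Matrix.mul_add, Matrix.mul_smul]
        simp [Matrix.add_apply, Matrix.smul_apply, smul_eq_mul]
      have E1 : ∑ a, ∑ b, (A a b - (W * (X + ς • Emat)) a b) ^ 2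
          = (∑ a, ∑ b, (A a b - (W * X) a b) ^ 2)
            + ς * ((-2) * ∑ a, ∑ b, (A a b - (W * X) a b) * ((W * Emat) a b))
            + ς ^ 2 * (∑ a, ∑ b, ((W * Emat) a b) ^ 2) := by
        rw [Finset.sum_congr rfl fun a _ => Finset.sum_congr rfl fun b _ =>
          (by rw [hmul a b]; ring :
            (A a b - (W * (X + ς • Emat)) a b) ^ 2
            = (A a b - (W * X) a b) ^ 2
              + ς * ((-2) * ((A a b - (W * X) a b) * ((W * Emat) a b)))
              + ς ^ 2 * (((W * Emat) a b) ^ 2))]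
        simp only [Finset.sum_add_distrib, ← Finset.mul_sum]
      have E2 : ∑ a, ∑ b, ((X + ς • Emat) a b) ^ 2
          = (∑ a, ∑ b, X a b ^ 2) + ς * (2 * ∑ a, ∑ b, X a b * Emat a b)
            + ς ^ 2 * (∑ a, ∑ b, Emat a b ^ 2) := by
        rw [Finset.sum_congr rfl fun a _ => Finset.sum_congr rfl fun b _ =>
          (by simp [Matrix.add_apply, Matrix.smul_apply, smul_eq_mul]; ring :
            ((X + ς • Emat) a b) ^ 2
            = X a b ^ 2 + ς * (2 * (X a b * Emat a b)) + ς ^ 2 * (Emat a b ^ 2))]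
        simp only [Finset.sum_add_distrib, ← Finset.mul_sum]
      have Et : ∑ j', trimmed1 1 (fun k => (X + ς • Emat) k j')
          = (∑ j', trimmed1 1 (fun k => X k j')) - ς * X i j := by
        have h1' : ∀ j' : Fin q, trimmed1 1 (fun k => (X + ς • Emat) k j')
            = trimmed1 1 (fun k => X k j') - ς * (if j' = j then X i j else 0) := by
          intro j'
          by_cases hjj : j' = j
          · subst hjj
            have hcol : (fun k => (X + ς • Emat) k j')
                = fun k => X k j' + ς * (if k = i then -(X i j') else 0) := by
              funext k
              simp only [Matrix.add_apply, Matrix.smul_apply, smul_eq_mul]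
              simp only [hEmat]
              split_ifs <;> simp
            rw [hcol]
            simp only [if_pos rfl]
            exact trimmed1_perturb (fun k => X k j') (fun k => hX k j') hne hle h0.le h1.le
          · have hcol : (fun k => (X + ς • Emat) k j') = fun k => X k j' := by
              funext k
              simp only [Matrix.add_apply, Matrix.smul_apply, smul_eq_mul]
              simp [hEmat, hjj]
            rw [hcol, if_neg hjj, mul_zero, sub_zero]
        rw [Finset.sum_congr rfl fun j' _ => h1' j', Finset.sum_sub_distrib]
        congr 1
        rw [← Finset.mul_sum, Finset.sum_ite_eq' Finset.univ j (fun _ => X i j)]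
        simp
      rw [E1, E2, Et]
      ring
    have hstat1 := hstat _ hd1mem _ hL1
    -- compute the two auxiliary sums
    have hSRG : ∑ a, ∑ b, (A a b - (W * X) a b) * ((W * Emat) a b)
        = -(X i j * ∑ a, W a i * (A a j - (W * X) a j)) := by
      rw [Finset.mul_sum, ← Finset.sum_neg_distrib]
      refine Finset.sum_congr rfl fun a _ => ?_
      rw [Finset.sum_congr rfl fun b _ => (by rw [hG a b] :
        (A a b - (W * X) a b) * ((W * Emat) a b)
        = (A a b - (W * X) a b) * (if b = j then -(W a i * X i j) else 0))]
      simp only [mul_ite, mul_zero, mul_neg]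
      rw [Finset.sum_ite_eq' Finset.univ j
        (fun b => -((A a b - (W * X) a b) * (W a i * X i j)))]
      simp only [Finset.mem_univ, if_pos]
      ring
    have hSXE : ∑ a, ∑ b, X a b * Emat a b = -(X i j * X i j) := by
      have h1' : ∀ a, ∑ b, X a b * Emat a b
          = if a = i then -(X i j * X i j) else 0 := by
        intro a
        by_cases ha : a = i
        · rw [ha, if_pos rfl]
          have h2' : ∀ b, X i b * Emat i b = if b = j then -(X i b * X i j) else 0 := by
            intro b; simp [hEmat, mul_ite, mul_zero, mul_neg]
          rw [Finset.sum_congr rfl fun b _ => h2' b,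
            Finset.sum_ite_eq' Finset.univ j (fun b => -(X i b * X i j))]
          simp
        · rw [if_neg ha]
          have h2' : ∀ b, X a b * Emat a b = 0 := by
            intro b; simp [hEmat, ha]
          simp [h2']
      rw [Finset.sum_congr rfl fun a _ => h1' a,
        Finset.sum_ite_eq' Finset.univ i (fun _ => -(X i j * X i j))]
      simp
    rw [hSRG, hSXE] at hstat1
    -- γ ≤ ∑ a, W a i * (A a j - (W*X) a j)
    have hγle : γ ≤ ∑ a, W a i * (A a j - (W * X) a j) := by
      have h1' : γ * X i j ≤ (∑ a, W a i * (A a j - (W * X) a j)) * X i j := by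
        nlinarith [mul_nonneg hη₂.le (mul_nonneg (hX i j) (hX i j))]
      exact le_of_mul_le_mul_right h1' he
    have hγle2 : γ ≤ ∑ a, W a i * A a j := by
      refine hγle.trans (Finset.sum_le_sum fun a _ => ?_)
      nlinarith [mul_nonneg (hW a i) (hB a j)]
    -- Cauchy–Schwarz and the bound on ‖W‖
    have hCS : ∑ a, W a i * A a j
        ≤ Real.sqrt (∑ a, W a i ^ 2) * Real.sqrt (∑ a, A a j ^ 2) :=
      sum_mul_le_sqrt (fun a => W a i) (fun a => A a j)
    have hcol2 : ∑ a, W a i ^ 2 ≤ ∑ a, ∑ b, W a b ^ 2 :=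
      Finset.sum_le_sum fun a _ =>
        Finset.single_le_sum (fun b _ => sq_nonneg (W a b)) (Finset.mem_univ i)
    have hW2 : ∑ a, ∑ b, W a b ^ 2 ≤ (∑ a, ∑ b, A a b ^ 2) / (2 * η₁) := by
      rw [le_div_iff₀ (by positivity)]
      nlinarith [hWbound]
    have hsqle : Real.sqrt (∑ a, W a i ^ 2)
        ≤ Real.sqrt (∑ a, ∑ b, A a b ^ 2) / (Real.sqrt 2 * Real.sqrt η₁) := by
      have h1' : Real.sqrt (∑ a, W a i ^ 2)
          ≤ Real.sqrt ((∑ a, ∑ b, A a b ^ 2) / (2 * η₁)) :=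
        Real.sqrt_le_sqrt (hcol2.trans hW2)
      rwa [Real.sqrt_div (Finset.sum_nonneg fun a _ =>
        Finset.sum_nonneg fun b _ => sq_nonneg (A a b)) (2 * η₁),
        Real.sqrt_mul (by norm_num : (0:ℝ) ≤ 2) η₁] at h1'
    -- put everything together
    have hα : (0:ℝ) ≤ Real.sqrt (∑ a, A a j ^ 2) := Real.sqrt_nonneg _
    have hfinal : γ ≤ Real.sqrt (∑ a, A a j ^ 2) / Real.sqrt 2 *
        (Real.sqrt (∑ a, ∑ b, A a b ^ 2) / Real.sqrt η₁) := by
      have h2' : ∑ a, W a i * A a j ≤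
          (Real.sqrt (∑ a, ∑ b, A a b ^ 2) / (Real.sqrt 2 * Real.sqrt η₁))
            * Real.sqrt (∑ a, A a j ^ 2) :=
        hCS.trans (mul_le_mul_of_nonneg_right hsqle hα)
      have h3' : (Real.sqrt (∑ a, ∑ b, A a b ^ 2) / (Real.sqrt 2 * Real.sqrt η₁))
            * Real.sqrt (∑ a, A a j ^ 2)
          = Real.sqrt (∑ a, A a j ^ 2) / Real.sqrt 2 *
            (Real.sqrt (∑ a, ∑ b, A a b ^ 2) / Real.sqrt η₁) := by ring
      linarith [hγle2, h2', h3'.le, h3'.ge]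
    have hthrj := hthr j
    simp only [l2, frobNorm] at hthrj
    have hmono : Real.sqrt (∑ a, A a j ^ 2) / Real.sqrt 2 *
          (Real.sqrt (∑ a, ∑ b, A a b ^ 2) / Real.sqrt η₁)
        ≤ Real.sqrt (∑ a, A a j ^ 2) / Real.sqrt 2 *
          (Real.sqrt (∑ a, ∑ b, A a b ^ 2) / Real.sqrt η₁ + Real.sqrt η₂) := by
      have : (0:ℝ) ≤ Real.sqrt (∑ a, A a j ^ 2) / Real.sqrt 2 := by positivity
      nlinarith [Real.sqrt_nonneg η₂]
    linarith
  rcases le_total (X i₁ j) (X i₂ j) with h | h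
  · exact (key i₁ i₂ hi₁₂ hi₁ hi₂ h).elim
  · exact (key i₂ i₁ (Ne.symm hi₁₂) hi₂ hi₁ h).elim
end

section
/- Let m ≤ n, q = m, K ∈ {0, …, q−1}, γ > 0, C ⊆ ℝ^{m×n}, and let f : ℝ^{m×n} → ℝ restricted to C be directionally differentiable and Lipschitz continuous on C with constant M with respect to the nuclear norm, i.e., |f(X) − f(Y)| ≤ M‖X − Y‖_* for all X, Y ∈ C. Suppose that for every X ∈ C there exists a singular value decomposition X = U [diag(σ₁(X), …, σ_q(X)), 0] Vᵀ such that −U [diag(0, …, 0, σ_{K+1}(X), …, σ_q(X)), 0] Vᵀ ∈ F(X; C). Then every d-stationary point X* of the problem of minimizing f(X) + γ 𝒯_K(X) over X ∈ C satisfies 𝒯_K(X*) = 0 (i.e., rank(X*) ≤ K), provided γ > M. -/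
open Filter Topology Matrix

/-- The singular values of `X` (in some order): square roots of the eigenvalues of `X Xᴴ`. -/
noncomputable def svals {m n : ℕ} (X : Matrix (Fin m) (Fin n) ℝ) : Fin m → ℝ :=
  fun i => Real.sqrt ((Matrix.isHermitian_mul_conjTranspose_self X).eigenvalues i)

/-- The truncated nuclear norm `𝒯_K(X)`: the sum of the `m − K` smallest singular values. -/
noncomputable def truncNuc {m n : ℕ} (K : ℕ) (X : Matrix (Fin m) (Fin n) ℝ) : ℝ :=
  sInf {s : ℝ | ∃ Λ : Finset (Fin m), Λ.card = m - K ∧ s = ∑ i ∈ Λ, svals X i}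

/-- The nuclear norm `‖X‖_*`: the sum of all singular values. -/
noncomputable def nucNorm {m n : ℕ} (X : Matrix (Fin m) (Fin n) ℝ) : ℝ :=
  ∑ i, svals X i

/-- The `m × n` rectangular diagonal matrix `[diag σ, 0]`. -/
def rectDiag {m n : ℕ} (σ : Fin m → ℝ) : Matrix (Fin m) (Fin n) ℝ :=
  Matrix.of fun i j => if (i : ℕ) = (j : ℕ) then σ i else 0

section Aux

open Polynomial

lemma charpoly_conj_aux {m : ℕ} (U B W : Matrix (Fin m) (Fin m) ℝ)
    (hUW : U * W = 1) : (U * B * W).charpoly = B.charpoly := by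
  have hWU : W * U = 1 := mul_eq_one_comm.mp hUW
  have hcm : charmatrix (U * B * W) = U.map C * charmatrix B * W.map C := by
    unfold charmatrix
    rw [Matrix.mul_sub, Matrix.sub_mul]
    congr 1
    · have h0 := (scalar_commute (X : ℝ[X]) (fun r' => Commute.all _ r')
        (U.map (C : ℝ →+* ℝ[X]))).eq
      rw [← h0, mul_assoc, ← Matrix.map_mul, hUW,
        Matrix.map_one _ (map_zero C) (map_one C), mul_one]
    · simp only [RingHom.mapMatrix_apply, ← Matrix.map_mul]
  unfold Matrix.charpoly
  rw [hcm, det_mul, det_mul, mul_comm, ← mul_assoc, ← det_mul, ← Matrix.map_mul, hWU,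
    Matrix.map_one _ (map_zero C) (map_one C), det_one, one_mul]

lemma charpoly_diagonal' {m : ℕ} (d : Fin m → ℝ) :
    (Matrix.diagonal d).charpoly = ∏ i, (X - C (d i)) := by
  have h : charmatrix (Matrix.diagonal d) = Matrix.diagonal (fun i => X - C (d i)) := by
    ext i j
    by_cases h : i = j
    · subst h; simp
    · rw [charmatrix_apply_ne _ _ _ h, Matrix.diagonal_apply_ne _ h,
        Matrix.diagonal_apply_ne _ h, map_zero, neg_zero]
  rw [Matrix.charpoly, h, Matrix.det_diagonal]

lemma prod_roots_aux {m : ℕ} {a b : Fin m → ℝ}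
    (h : ∏ i, (X - C (a i)) = ∏ i, (X - C (b i))) :
    Multiset.map a Finset.univ.val = Multiset.map b Finset.univ.val := by
  have ha : ∏ i, (X - C (a i)) = ((Multiset.map a Finset.univ.val).map
      (fun r : ℝ => X - C r)).prod := by
    rw [Multiset.map_map]; rfl
  have hb : ∏ i, (X - C (b i)) = ((Multiset.map b Finset.univ.val).map
      (fun r : ℝ => X - C r)).prod := by
    rw [Multiset.map_map]; rfl
  have := congrArg Polynomial.roots (ha ▸ hb ▸ h)
  rwa [Polynomial.roots_multiset_prod_X_sub_C, Polynomial.roots_multiset_prod_X_sub_C] at this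

lemma eig_multiset {m : ℕ} {A U : Matrix (Fin m) (Fin m) ℝ} {d : Fin m → ℝ}
    (hU : Uᵀ * U = 1) (hA : A.IsHermitian) (hAeq : A = U * Matrix.diagonal d * Uᵀ) :
    Multiset.map hA.eigenvalues Finset.univ.val = Multiset.map d Finset.univ.val := by
  have hUUt : U * Uᵀ = 1 := mul_eq_one_comm.mp hU
  set W : Matrix (Fin m) (Fin m) ℝ := (hA.eigenvectorUnitary : Matrix (Fin m) (Fin m) ℝ) with hW
  have hWmem : W ∈ Matrix.unitaryGroup (Fin m) ℝ := (hA.eigenvectorUnitary).2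
  have hW2 : W * star W = 1 := Matrix.mem_unitaryGroup_iff.mp hWmem
  have hspec : A = W * Matrix.diagonal hA.eigenvalues * star W := by
    have := hA.spectral_theorem
    rwa [RCLike.ofReal_real_eq_id, Function.id_comp] at this
  have h1 : A.charpoly = ∏ i, (X - C (hA.eigenvalues i)) := by
    conv_lhs => rw [hspec]
    rw [charpoly_conj_aux _ _ _ hW2, charpoly_diagonal']
  have h2 : A.charpoly = ∏ i, (X - C (d i)) := by
    rw [hAeq, charpoly_conj_aux _ _ _ hUUt, charpoly_diagonal']
  exact prod_roots_aux (h1 ▸ h2)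

lemma exists_comp_perm {α : Type*} [Fintype α] [DecidableEq α] (f g : α → ℝ)
    (h : Multiset.map f Finset.univ.val = Multiset.map g Finset.univ.val) :
    ∃ e : Equiv.Perm α, f = g ∘ e := by
  classical
  have hcount : ∀ c : ℝ, Fintype.card {a // f a = c} = Fintype.card {a // g a = c} := by
    intro c
    rw [Fintype.card_subtype, Fintype.card_subtype]
    have hf : ∀ (u : α → ℝ), (Finset.univ.filter fun a => u a = c).card
        = Multiset.count c (Multiset.map u Finset.univ.val) := by
      intro u
      rw [Multiset.count_map]
      simp only [eq_comm]
      rfl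
    rw [hf, hf, h]
  refine ⟨Equiv.ofFiberEquiv (f := f) (g := g)
    (fun c => Fintype.equivOfCardEq (hcount c)), ?_⟩
  funext a
  exact (Equiv.ofFiberEquiv_map (fun c => Fintype.equivOfCardEq (hcount c)) a).symm

lemma rectDiag_mul_transpose {m n : ℕ} (hmn : m ≤ n) (d : Fin m → ℝ) :
    rectDiag (n := n) d * (rectDiag (n := n) d)ᵀ = Matrix.diagonal (fun i => d i ^ 2) := by
  ext i j
  simp only [Matrix.mul_apply, Matrix.transpose_apply, rectDiag, Matrix.of_apply]
  rw [Finset.sum_eq_single (Fin.castLE hmn i)]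
  · by_cases h : i = j
    · subst h; simp [pow_two]
    · have h2 : ¬ ((j : ℕ) = ((Fin.castLE hmn i) : ℕ)) := by
        simp only [Fin.coe_castLE]
        exact fun hh => h (Fin.ext hh.symm)
      rw [if_neg h2, Matrix.diagonal_apply_ne _ h, mul_zero]
  · intro k _ hk
    have : ¬ ((i : ℕ) = (k : ℕ)) := by
      intro hh
      exact hk (by ext; simp [← hh])
    simp [this]
  · simp

lemma rectDiag_comb {m n : ℕ} (a b : Fin m → ℝ) (c : ℝ) :
    rectDiag (n := n) a + c • rectDiag (n := n) b = rectDiag (fun i => a i + c * b i) := by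
  ext i j
  simp only [Matrix.add_apply, Matrix.smul_apply, rectDiag, Matrix.of_apply, smul_eq_mul]
  by_cases h : (i : ℕ) = (j : ℕ) <;> simp [h]

lemma rectDiag_smul {m n : ℕ} (a : Fin m → ℝ) (c : ℝ) :
    c • rectDiag (n := n) a = rectDiag (fun i => c * a i) := by
  ext i j
  simp only [Matrix.smul_apply, rectDiag, Matrix.of_apply, smul_eq_mul]
  by_cases h : (i : ℕ) = (j : ℕ) <;> simp [h]

lemma mul_rectDiag_comb {m n : ℕ} (U : Matrix (Fin m) (Fin m) ℝ) (V : Matrix (Fin n) (Fin n) ℝ)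
    (a b : Fin m → ℝ) (c : ℝ) :
    U * rectDiag (n := n) a * Vᵀ + c • (U * rectDiag (n := n) b * Vᵀ)
      = U * rectDiag (n := n) (fun i => a i + c * b i) * Vᵀ := by
  rw [← rectDiag_comb a b c, Matrix.mul_add, Matrix.add_mul]
  congr 1
  rw [Matrix.mul_smul, Matrix.smul_mul]

lemma card_hi {m : ℕ} (K : ℕ) :
    (Finset.univ.filter fun i : Fin m => K ≤ (i : ℕ)).card = m - K := by
  rw [Finset.card_filter, Fin.sum_univ_eq_sum_range (fun i => if K ≤ i then 1 else 0),
    ← Finset.card_filter]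
  have : (Finset.range m).filter (fun i => K ≤ i) = Finset.Ico K m := by
    ext x; simp [Finset.mem_Ico, and_comm]
  rw [this, Nat.card_Ico]

lemma svals_conj {m n : ℕ} (hmn : m ≤ n) (U : Matrix (Fin m) (Fin m) ℝ)
    (V : Matrix (Fin n) (Fin n) ℝ) (hU : Uᵀ * U = 1) (hV : Vᵀ * V = 1) (d : Fin m → ℝ) :
    ∃ e : Equiv.Perm (Fin m), svals (U * rectDiag (n := n) d * Vᵀ) = (fun i => |d i|) ∘ e := by
  set Y := U * rectDiag (n := n) d * Vᵀ with hYdef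
  have hYY : Y * Yᴴ = U * Matrix.diagonal (fun i => d i ^ 2) * Uᵀ := by
    rw [Matrix.conjTranspose_eq_transpose_of_trivial]
    have h1 : Y * Yᵀ = U * (rectDiag (n := n) d * ((Vᵀ * V)
        * ((rectDiag (n := n) d)ᵀ * Uᵀ))) := by
      simp only [hYdef, Matrix.transpose_mul, Matrix.transpose_transpose, Matrix.mul_assoc]
    rw [h1, hV, Matrix.one_mul, ← Matrix.mul_assoc (rectDiag (n := n) d),
      rectDiag_mul_transpose hmn]
    exact (Matrix.mul_assoc U _ _).symm
  have hA : (Y * Yᴴ).IsHermitian := Matrix.isHermitian_mul_conjTranspose_self Y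
  have hmul := eig_multiset (U := U) (d := fun i => d i ^ 2) hU hA hYY
  have hms : Multiset.map (svals Y) Finset.univ.val
      = Multiset.map (fun i => |d i|) Finset.univ.val := by
    have h1 : svals Y = fun i => Real.sqrt (hA.eigenvalues i) := rfl
    have h2 : Multiset.map (fun i => Real.sqrt (hA.eigenvalues i)) Finset.univ.val
        = Multiset.map Real.sqrt (Multiset.map hA.eigenvalues Finset.univ.val) := by
      rw [Multiset.map_map]; rfl
    rw [h1, h2, hmul, Multiset.map_map]
    congr 1
    funext i
    simp [Real.sqrt_sq_eq_abs]
  exact exists_comp_perm _ _ hms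

lemma key_sum {m K : ℕ} (hK : K < m) (σ : Fin m → ℝ) (hmono : Antitone σ)
    (Λ : Finset (Fin m)) (hcard : Λ.card = m - K) :
    ∑ i ∈ Finset.univ.filter (fun i : Fin m => K ≤ (i : ℕ)), σ i ≤ ∑ i ∈ Λ, σ i := by
  classical
  set hi := Finset.univ.filter (fun i : Fin m => K ≤ (i : ℕ)) with hhi
  set K0 : Fin m := ⟨K, hK⟩ with hK0
  have hsplitΛ : ∑ i ∈ Λ ∩ hi, σ i + ∑ i ∈ Λ \ hi, σ i = ∑ i ∈ Λ, σ i :=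
    Finset.sum_inter_add_sum_sdiff Λ hi σ
  have hsplithi : ∑ i ∈ hi ∩ Λ, σ i + ∑ i ∈ hi \ Λ, σ i = ∑ i ∈ hi, σ i :=
    Finset.sum_inter_add_sum_sdiff hi Λ σ
  have hcards : (hi \ Λ).card = (Λ \ hi).card := by
    have h1 : (Λ ∩ hi).card + (Λ \ hi).card = Λ.card :=
      Finset.card_inter_add_card_sdiff Λ hi
    have h2 : (hi ∩ Λ).card + (hi \ Λ).card = hi.card :=
      Finset.card_inter_add_card_sdiff hi Λ
    have h3 : hi.card = m - K := card_hi K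
    have h4 : Λ ∩ hi = hi ∩ Λ := Finset.inter_comm Λ hi
    rw [h4] at h1
    omega
  have hub : ∑ i ∈ hi \ Λ, σ i ≤ (hi \ Λ).card • σ K0 := by
    apply Finset.sum_le_card_nsmul
    intro x hx
    apply hmono
    have hx' : x ∈ hi := (Finset.mem_sdiff.mp hx).1
    exact (Finset.mem_filter.mp hx').2
  have hlb2 : (Λ \ hi).card • σ K0 ≤ ∑ i ∈ Λ \ hi, σ i := by
    apply Finset.card_nsmul_le_sum
    intro x hx
    apply hmono
    have hx' : x ∉ hi := (Finset.mem_sdiff.mp hx).2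
    have hxl : ¬ K ≤ (x : ℕ) := fun hh => hx' (Finset.mem_filter.mpr ⟨Finset.mem_univ _, hh⟩)
    exact le_of_lt (Nat.lt_of_not_le hxl)
  have h5 : ∑ i ∈ hi \ Λ, σ i ≤ ∑ i ∈ Λ \ hi, σ i := by
    calc ∑ i ∈ hi \ Λ, σ i ≤ (hi \ Λ).card • σ K0 := hub
    _ = (Λ \ hi).card • σ K0 := by rw [hcards]
    _ ≤ ∑ i ∈ Λ \ hi, σ i := hlb2
  have h6 : ∑ i ∈ Λ ∩ hi, σ i = ∑ i ∈ hi ∩ Λ, σ i := by rw [Finset.inter_comm]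
  linarith

lemma truncNuc_eq {m n K : ℕ} (hK : K < m) (X : Matrix (Fin m) (Fin n) ℝ) (σ : Fin m → ℝ)
    (hmono : Antitone σ) (e : Equiv.Perm (Fin m))
    (hs : svals X = σ ∘ e) :
    truncNuc K X = ∑ i ∈ Finset.univ.filter (fun i : Fin m => K ≤ (i : ℕ)), σ i := by
  classical
  set hi := Finset.univ.filter (fun i : Fin m => K ≤ (i : ℕ)) with hhi
  set T0 := ∑ i ∈ hi, σ i with hT0
  set S := {s : ℝ | ∃ Λ : Finset (Fin m), Λ.card = m - K ∧ s = ∑ i ∈ Λ, svals X i} with hS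
  have hlb : ∀ s ∈ S, T0 ≤ s := by
    rintro s ⟨Λ, hΛ, rfl⟩
    have h1 : ∑ i ∈ Λ, svals X i = ∑ j ∈ Λ.image e, σ j := by
      rw [Finset.sum_image (fun a _ b _ h => e.injective h)]
      simp [hs]
    rw [h1]
    exact key_sum hK σ hmono _
      (by rw [Finset.card_image_of_injective _ e.injective, hΛ])
  have hmem : T0 ∈ S := by
    refine ⟨hi.image e.symm, ?_, ?_⟩
    · rw [Finset.card_image_of_injective _ e.symm.injective, hhi, card_hi]
    · rw [Finset.sum_image (fun a _ b _ h => e.symm.injective h)]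
      simp [hs, hT0]
  exact le_antisymm (csInf_le ⟨T0, hlb⟩ hmem) (le_csInf ⟨T0, hmem⟩ hlb)

end Aux

/-- Exact penalty at d-stationary points of composite problems with the truncated
nuclear norm penalty, for a loss Lipschitz w.r.t. the nuclear norm. -/
theorem stmt19 {m n : ℕ} (hmn : m ≤ n) {K : ℕ} (hK : K < m)
    (γ : ℝ) (hγ : 0 < γ)
    (C : Set (Matrix (Fin m) (Fin n) ℝ))
    (f : Matrix (Fin m) (Fin n) ℝ → ℝ)
    -- f restricted to C is directionally differentiable, with derivative df
    (df : Matrix (Fin m) (Fin n) ℝ → Matrix (Fin m) (Fin n) ℝ → ℝ)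
    (hdf : ∀ X ∈ C, ∀ D ∈ feasCone C X, HasDDerivAt f X D (df X D))
    -- f is Lipschitz on C with constant M w.r.t. the nuclear norm
    (M : ℝ) (hlip : ∀ X ∈ C, ∀ Y ∈ C, |f X - f Y| ≤ M * nucNorm (X - Y))
    -- (C1): a suitable SVD-based direction is feasible at every point of C
    (hC1 : ∀ X ∈ C, ∃ (U : Matrix (Fin m) (Fin m) ℝ) (V : Matrix (Fin n) (Fin n) ℝ)
      (σ : Fin m → ℝ),
      Uᵀ * U = 1 ∧ Vᵀ * V = 1 ∧ Antitone σ ∧ (∀ i, 0 ≤ σ i) ∧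
      X = U * rectDiag σ * Vᵀ ∧
      -(U * rectDiag (fun i => if (i : ℕ) < K then 0 else σ i) * Vᵀ) ∈ feasCone C X)
    (Xstar : Matrix (Fin m) (Fin n) ℝ) (hXC : Xstar ∈ C)
    -- X* is a d-stationary point: f′(X*;D) + γ 𝒯_K′(X*;D) ≥ 0 for feasible D
    (hstat : ∀ D ∈ feasCone C Xstar, ∀ LT : ℝ,
      HasDDerivAt (truncNuc K) Xstar D LT → 0 ≤ df Xstar D + γ * LT)
    (hγM : γ > M) :
    truncNuc K Xstar = 0 ∧ Xstar.rank ≤ K := by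
  classical
  obtain ⟨U, V, σ, hU, hV, hmono, hσ0, hXeq, hDfeas⟩ := hC1 Xstar hXC
  set τ : Fin m → ℝ := fun i => if (i : ℕ) < K then 0 else σ i with hτ
  set D : Matrix (Fin m) (Fin n) ℝ := -(U * rectDiag τ * Vᵀ) with hD
  have hcomb : ∀ c : ℝ, Xstar + c • D = U * rectDiag (fun i => σ i + (-c) * τ i) * Vᵀ := by
    intro c
    rw [hD, smul_neg, ← neg_smul, hXeq]
    exact mul_rectDiag_comb U V σ τ (-c)
  set hi := Finset.univ.filter (fun i : Fin m => K ≤ (i : ℕ)) with hhi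
  set T0 := ∑ i ∈ hi, σ i with hT0def
  have hT0nn : 0 ≤ T0 := Finset.sum_nonneg fun i _ => hσ0 i
  have hτnn : ∀ i, 0 ≤ τ i := by
    intro i
    rw [hτ]
    by_cases h : (i : ℕ) < K <;> simp [h, hσ0 i]
  -- truncated nuclear norm along the ray
  have htrunc : ∀ c : ℝ, 0 ≤ c → c ≤ 1 → truncNuc K (Xstar + c • D) = T0 - c * T0 := by
    intro c hc0 hc1
    set g : Fin m → ℝ := fun i => σ i + (-c) * τ i with hg
    have hgval : ∀ i : Fin m, g i = if (i : ℕ) < K then σ i else (1 - c) * σ i := by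
      intro i
      rw [hg, hτ]
      by_cases h : (i : ℕ) < K
      · simp [h]
      · simp [h]; ring
    have hgnn : ∀ i, 0 ≤ g i := by
      intro i
      rw [hgval]
      by_cases h : (i : ℕ) < K
      · simpa [h] using hσ0 i
      · rw [if_neg h]
        exact mul_nonneg (by linarith) (hσ0 i)
    have hgmono : Antitone g := by
      intro i j hij
      rw [hgval, hgval]
      have hijn : (i : ℕ) ≤ (j : ℕ) := hij
      by_cases hiK : (i : ℕ) < K <;> by_cases hjK : (j : ℕ) < K
      · simpa [hiK, hjK] using hmono hij
      · rw [if_pos hiK, if_neg hjK]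
        calc (1 - c) * σ j ≤ 1 * σ j := by nlinarith [hσ0 j]
        _ = σ j := one_mul _
        _ ≤ σ i := hmono hij
      · exact absurd (lt_of_le_of_lt hijn hjK) hiK
      · rw [if_neg hiK, if_neg hjK]
        exact mul_le_mul_of_nonneg_left (hmono hij) (by linarith)
    obtain ⟨e, he⟩ := svals_conj hmn U V hU hV g
    have habs : (fun i => |g i|) = g := funext fun i => abs_of_nonneg (hgnn i)
    rw [hcomb c, truncNuc_eq hK _ g hgmono e (by rw [habs] at he; exact he)]
    have hsc : ∀ i ∈ hi, g i = (1 - c) * σ i := by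
      intro i hi'
      have hKi : K ≤ (i : ℕ) := (Finset.mem_filter.mp hi').2
      rw [hgval, if_neg (not_lt.mpr hKi)]
    rw [← hhi, Finset.sum_congr rfl hsc, ← Finset.mul_sum, ← hT0def]
    ring
  have htruncX : truncNuc K Xstar = T0 := by
    have h := htrunc 0 le_rfl zero_le_one
    simpa using h
  -- nuclear norm of c • D
  have hτsum : ∑ i, τ i = T0 := by
    rw [hT0def, hhi, Finset.sum_filter]
    apply Finset.sum_congr rfl
    intro i _
    by_cases h : K ≤ (i : ℕ)
    · simp [hτ, h, not_lt.mpr h]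
    · simp [hτ, h, Nat.lt_of_not_le h]
  have hnuc : ∀ c : ℝ, 0 ≤ c → nucNorm (c • D) = c * T0 := by
    intro c hc
    have h1 : c • D = U * rectDiag (n := n) (fun i => -c * τ i) * Vᵀ := by
      rw [hD, smul_neg, ← neg_smul, ← rectDiag_smul, Matrix.mul_smul, Matrix.smul_mul]
      rfl
    obtain ⟨e, he⟩ := svals_conj hmn U V hU hV (fun i => -c * τ i)
    unfold nucNorm
    rw [h1, he]
    simp only [Function.comp_apply]
    rw [Equiv.sum_comp e (fun i => |-c * τ i|)]
    have : ∀ i : Fin m, |-c * τ i| = c * τ i := by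
      intro i
      rw [abs_mul, abs_neg, abs_of_nonneg hc, abs_of_nonneg (hτnn i)]
    simp only [this]
    rw [← Finset.mul_sum, hτsum]
  -- directional derivative of the truncated nuclear norm
  have hTd : HasDDerivAt (truncNuc K) Xstar D (-T0) := by
    unfold HasDDerivAt
    have hev : (fun ς : ℝ => (truncNuc K (Xstar + ς • D) - truncNuc K Xstar) / ς)
        =ᶠ[nhdsWithin 0 (Set.Ioi 0)] (fun _ => -T0) := by
      filter_upwards [Ioo_mem_nhdsGT_of_mem (Set.mem_Ico.mpr ⟨le_refl (0 : ℝ), one_pos⟩)]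
        with ς hς
      rw [htrunc ς (le_of_lt hς.1) (le_of_lt hς.2), htruncX]
      have h2 : T0 - ς * T0 - T0 = -T0 * ς := by ring
      rw [h2, mul_div_assoc, div_self (ne_of_gt hς.1), mul_one]
    exact tendsto_const_nhds.congr' hev.symm
  -- bound on the directional derivative of f
  obtain ⟨-, ς', hς'pos, hςmem⟩ := hDfeas
  have hdfle : df Xstar D ≤ M * T0 := by
    apply le_of_tendsto (hdf Xstar hXC D ⟨hXC, ς', hς'pos, hςmem⟩)
    filter_upwards [Ioo_mem_nhdsGT_of_mem (Set.mem_Ico.mpr ⟨le_refl (0 : ℝ), hς'pos⟩)]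
      with ς hςm
    obtain ⟨hς0, hςlt⟩ := hςm
    have hmemC : Xstar + ς • D ∈ C := hςmem ς hς0 hςlt
    have hl := hlip _ hmemC _ hXC
    rw [add_sub_cancel_left] at hl
    rw [div_le_iff₀ hς0]
    calc f (Xstar + ς • D) - f Xstar ≤ |f (Xstar + ς • D) - f Xstar| := le_abs_self _
    _ ≤ M * nucNorm (ς • D) := hl
    _ = M * (ς * T0) := by rw [hnuc ς (le_of_lt hς0)]
    _ = M * T0 * ς := by ring
  have hst := hstat D ⟨hXC, ς', hς'pos, hςmem⟩ (-T0) hTd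
  have hT0le : T0 ≤ 0 := by nlinarith
  have hT0z : T0 = 0 := le_antisymm hT0le hT0nn
  refine ⟨by rw [htruncX, hT0z], ?_⟩
  -- rank bound
  have hsum0 : ∑ i ∈ hi, σ i = 0 := by rw [← hT0def]; exact hT0z
  have hσz : ∀ i : Fin m, K ≤ (i : ℕ) → σ i = 0 := by
    intro i hKi
    exact (Finset.sum_eq_zero_iff_of_nonneg (fun j _ => hσ0 j)).mp hsum0 i
      (Finset.mem_filter.mpr ⟨Finset.mem_univ _, hKi⟩)
  set P : Matrix (Fin m) (Fin K) ℝ :=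
    Matrix.of (fun i k => if (i : ℕ) = (k : ℕ) then σ i else 0) with hP
  set Q : Matrix (Fin K) (Fin n) ℝ :=
    Matrix.of (fun k j => if (k : ℕ) = (j : ℕ) then 1 else 0) with hQ
  have hPQ : rectDiag (n := n) σ = P * Q := by
    ext i j
    simp only [Matrix.mul_apply, rectDiag, Matrix.of_apply, hP, hQ]
    by_cases hiK : (i : ℕ) < K
    · rw [Finset.sum_eq_single (⟨(i : ℕ), hiK⟩ : Fin K)]
      · by_cases h : (i : ℕ) = (j : ℕ) <;> simp [h]
      · intro k _ hk
        have : ¬ ((i : ℕ) = (k : ℕ)) := by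
          intro hh
          exact hk (by ext; simp [← hh])
        simp [this]
      · simp
    · have hz : σ i = 0 := hσz i (not_lt.mp hiK)
      rw [hz, ite_self, Finset.sum_eq_zero]
      intro k _
      have : ¬ ((i : ℕ) = (k : ℕ)) := by
        intro hh
        exact hiK (hh ▸ k.isLt)
      simp [this]
  calc Xstar.rank = (U * rectDiag σ * Vᵀ).rank := by exact congrArg Matrix.rank hXeq
  _ ≤ (U * rectDiag σ).rank := Matrix.rank_mul_le_left _ _
  _ ≤ (rectDiag (n := n) σ).rank := Matrix.rank_mul_le_right _ _
  _ = (P * Q).rank := by rw [hPQ]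
  _ ≤ P.rank := Matrix.rank_mul_le_left _ _
  _ ≤ Fintype.card (Fin K) := Matrix.rank_le_card_width _
  _ = K := Fintype.card_fin _
end
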